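/- arXiv:2006.13754 — 9 statements merged into one kernel-verified Lean document; each statement's English description precedes it below -/
import Mathlib

section
/- Let g(R) = Σ_{q∈R} g(q) be a non-negative modular function and d(R) = Σ_{{q,q'}⊆R} A(q,q') a diversity function where A is a symmetric, zero-diagonal, non-negative γ-semi-metric with γ ≥ 1. Then f(R) := d(R) + g(R) is γ-meta-submodular. -/
open Finset

/-- First-order difference `B_i(S) = f(S ∪ {i}) - f(S \ {i})`. -/
def Bdiff {n : ℕ} (f : Finset (Fin n) → ℝ) (i : Fin n) (S : Finset (Fin n)) : ℝ :=
  f (insert i S) - f (S.erase i)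

/-- Second-order difference `A_{ij}(S)`. -/
def Adiff {n : ℕ} (f : Finset (Fin n) → ℝ) (i j : Fin n) (S : Finset (Fin n)) : ℝ :=
  f (insert j (insert i S)) - f ((insert i S).erase j)
    - f (insert j (S.erase i)) + f ((S.erase i).erase j)

/-- The sum of a non-negative modular function and a diversity function built on a
γ-semi-metric dissimilarity (γ ≥ 1) is γ-meta-submodular. -/
theorem modular_plus_semimetric_diversity_metaSubmodular {n : ℕ} (γ : ℝ) (hγ : 1 ≤ γ)
    (g : Fin n → ℝ) (hg : ∀ q, 0 ≤ g q)
    (A : Fin n → Fin n → ℝ)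
    (hAnn : ∀ q q', 0 ≤ A q q')
    (hAsymm : ∀ q q', A q q' = A q' q)
    (hAdiag : ∀ q, A q q = 0)
    (hsemi : ∀ i j k : Fin n, A i j ≤ γ * (A i k + A k j))
    (f : Finset (Fin n) → ℝ)
    (hf : ∀ R : Finset (Fin n),
      f R = (∑ q ∈ R, g q) + (1 / 2) * ∑ q ∈ R, ∑ q' ∈ R, A q q') :
    ∀ S : Finset (Fin n), S.Nonempty → ∀ i j : Fin n,
      (S.card : ℝ) * Adiff f i j S ≤ γ * (Bdiff f i S + Bdiff f j S) := by
  intro S _hS i j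
  -- closed form for Bdiff
  have hB : ∀ (k : Fin n) (U : Finset (Fin n)),
      Bdiff f k U = g k + ∑ q ∈ U.erase k, A k q := by
    intro k U
    have hk : k ∉ U.erase k := Finset.notMem_erase _ _
    have hins : insert k U = insert k (U.erase k) := by
      ext x; simp [Finset.mem_insert, Finset.mem_erase]; tauto
    have hsym : ∑ q ∈ U.erase k, A q k = ∑ q ∈ U.erase k, A k q :=
      Finset.sum_congr rfl (fun q _ => hAsymm q k)
    unfold Bdiff
    rw [hf, hf, hins]
    rw [Finset.sum_insert hk, Finset.sum_insert hk]
    simp only [Finset.sum_insert hk, Finset.sum_add_distrib]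
    rw [hsym, hAdiag]
    ring
  have hBnn : ∀ (k : Fin n) (U : Finset (Fin n)), 0 ≤ Bdiff f k U := by
    intro k U
    rw [hB]
    have : 0 ≤ ∑ q ∈ U.erase k, A k q :=
      Finset.sum_nonneg (fun q _ => hAnn k q)
    linarith [hg k]
  have hγ0 : (0:ℝ) ≤ γ := by linarith
  by_cases hij : i = j
  · subst hij
    have hA0 : Adiff f i i S = 0 := by
      have h1 : insert i (insert i S) = insert i S := Finset.insert_idem i S
      have h2 : (insert i S).erase i = S.erase i := by
        ext x; simp [Finset.mem_insert, Finset.mem_erase]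
      have h3 : insert i (S.erase i) = insert i S := by
        ext x; simp [Finset.mem_insert, Finset.mem_erase]; tauto
      have h4 : (S.erase i).erase i = S.erase i := by
        ext x; simp [Finset.mem_erase]
      unfold Adiff
      rw [h1, h2, h3, h4]; ring
    rw [hA0, mul_zero]
    have := hBnn i S
    nlinarith
  · -- Adiff equals A j i
    have hAd : Adiff f i j S = A j i := by
      have hdiff : Adiff f i j S = Bdiff f j (insert i S) - Bdiff f j (S.erase i) := by
        unfold Adiff Bdiff; ring
      rw [hdiff, hB, hB]
      set W := (S.erase i).erase j with hW
      have hiW : i ∉ W := by simp [hW, Finset.mem_erase]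
      have he : (insert i S).erase j = insert i W := by
        ext x
        simp only [hW, Finset.mem_erase, Finset.mem_insert]
        constructor
        · rintro ⟨hxj, hx⟩
          rcases hx with h | h
          · exact Or.inl h
          · by_cases hxi : x = i
            · exact Or.inl hxi
            · exact Or.inr ⟨hxj, hxi, h⟩
        · rintro (rfl | ⟨hxj, hxi, hx⟩)
          · exact ⟨hij, Or.inl rfl⟩
          · exact ⟨hxj, Or.inr hx⟩
      rw [he, Finset.sum_insert hiW]
      ring
    rw [hAd, hB, hB]
    -- sum the semimetric inequality over S
    have hsum : (S.card : ℝ) * A j i ≤ γ * ((∑ k ∈ S, A j k) + (∑ k ∈ S, A k i)) := by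
      have h1 : (S.card : ℝ) * A j i = ∑ _k ∈ S, A j i := by
        rw [Finset.sum_const, nsmul_eq_mul]
      rw [h1]
      calc ∑ _k ∈ S, A j i ≤ ∑ k ∈ S, γ * (A j k + A k i) :=
            Finset.sum_le_sum (fun k _ => hsemi j i k)
        _ = γ * ((∑ k ∈ S, A j k) + (∑ k ∈ S, A k i)) := by
            rw [← Finset.mul_sum, Finset.sum_add_distrib]
    have hj : ∑ k ∈ S, A j k = ∑ k ∈ S.erase j, A j k :=
      (Finset.sum_erase S (hAdiag j)).symm
    have hi : ∑ k ∈ S, A k i = ∑ k ∈ S.erase i, A i k := by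
      rw [show (∑ k ∈ S, A k i) = ∑ k ∈ S, A i k from
        Finset.sum_congr rfl fun k _ => hAsymm k i]
      exact (Finset.sum_erase S (hAdiag i)).symm
    rw [hj, hi] at hsum
    calc (S.card : ℝ) * A j i
        ≤ γ * ((∑ k ∈ S.erase j, A j k) + (∑ k ∈ S.erase i, A i k)) := hsum
      _ ≤ γ * ((g i + ∑ q ∈ S.erase i, A i q) + (g j + ∑ q ∈ S.erase j, A j q)) := by
          apply mul_le_mul_of_nonneg_left _ hγ0
          linarith [hg i, hg j]
end

section
/- Every monotone proportionally submodular set function is 1-meta-submodular. -/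
open Finset

/-- Every monotone (non-negative) proportionally submodular function is
1-meta-submodular. -/
theorem proportionallySubmodular_one_metaSubmodular {n : ℕ}
    (f : Finset (Fin n) → ℝ)
    (hnonneg : ∀ S : Finset (Fin n), 0 ≤ f S)
    (hmono : ∀ S T : Finset (Fin n), S ⊆ T → f S ≤ f T)
    (hprop : ∀ S T : Finset (Fin n),
      ((S ∩ T).card : ℝ) * f (S ∪ T) + ((S ∪ T).card : ℝ) * f (S ∩ T) ≤
        (T.card : ℝ) * f S + (S.card : ℝ) * f T) :
    ∀ R : Finset (Fin n), R.Nonempty → ∀ i j : Fin n,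
      (R.card : ℝ) * Adiff f i j R ≤ Bdiff f i R + Bdiff f j R := by
  intro R hR i j
  rcases eq_or_ne i j with rfl | hij
  · -- diagonal case : Adiff = 0 and Bdiff ≥ 0
    have h1 : f (R.erase i) ≤ f (insert i R) :=
      hmono _ _ ((Finset.erase_subset i R).trans (Finset.subset_insert i R))
    have e1 : insert i (R.erase i) = insert i R := by
      ext x; rcases eq_or_ne x i with rfl | hxi <;> simp_all
    have hA : Adiff f i i R = 0 := by
      simp only [Adiff, Finset.insert_idem, Finset.erase_insert_eq_erase, Finset.erase_idem, e1]
      ring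
    rw [hA]
    simp only [Bdiff, mul_zero]
    linarith
  · have key := hprop ((insert i R).erase j) (insert j (R.erase i))
    have hU : (insert i R).erase j ∪ insert j (R.erase i) = insert j (insert i R) := by
      ext x
      rcases eq_or_ne x i with rfl | hxi <;> rcases eq_or_ne x j with rfl | hxj <;>
        simp_all [Finset.mem_union, Finset.mem_erase, Finset.mem_insert]
    have hI : (insert i R).erase j ∩ insert j (R.erase i) = (R.erase i).erase j := by
      ext x
      rcases eq_or_ne x i with rfl | hxi <;> rcases eq_or_ne x j with rfl | hxj <;>
        simp_all [Finset.mem_inter, Finset.mem_erase, Finset.mem_insert]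
    rw [hU, hI] at key
    by_cases hi : i ∈ R <;> by_cases hj : j ∈ R
    · -- both in R
      have hji : j ∈ R.erase i := Finset.mem_erase.2 ⟨hij.symm, hj⟩
      have eI : insert i R = R := Finset.insert_eq_self.2 hi
      have eJ : insert j R = R := Finset.insert_eq_self.2 hj
      have eT : insert j (R.erase i) = R.erase i := Finset.insert_eq_self.2 hji
      have cT : ((R.erase i).card : ℝ) = (R.card : ℝ) - 1 := by
        have h : ((R.erase i).card : ℝ) + 1 = R.card := by
          exact_mod_cast Finset.card_erase_add_one hi
        linarith
      have cS : ((R.erase j).card : ℝ) = (R.card : ℝ) - 1 := by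
        have h : ((R.erase j).card : ℝ) + 1 = R.card := by
          exact_mod_cast Finset.card_erase_add_one hj
        linarith
      have cI : (((R.erase i).erase j).card : ℝ) = (R.card : ℝ) - 2 := by
        have h : (((R.erase i).erase j).card : ℝ) + 1 = (R.erase i).card := by
          exact_mod_cast Finset.card_erase_add_one hji
        linarith
      simp only [Adiff, Bdiff, eI, eJ, eT] at key ⊢
      rw [cI, cT, cS] at key
      linarith
    · -- i ∈ R, j ∉ R
      have hjE : j ∉ R.erase i := fun h => hj (Finset.mem_of_mem_erase h)
      have eI : insert i R = R := Finset.insert_eq_self.2 hi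
      have eJ : R.erase j = R := Finset.erase_eq_self.2 hj
      have eJI : (R.erase i).erase j = R.erase i := Finset.erase_eq_self.2 hjE
      have cT : ((R.erase i).card : ℝ) = (R.card : ℝ) - 1 := by
        have h : ((R.erase i).card : ℝ) + 1 = R.card := by
          exact_mod_cast Finset.card_erase_add_one hi
        linarith
      have cU : ((insert j R).card : ℝ) = (R.card : ℝ) + 1 := by
        exact_mod_cast Finset.card_insert_of_notMem hj
      have cT2 : ((insert j (R.erase i)).card : ℝ) = (R.card : ℝ) := by
        have h : ((insert j (R.erase i)).card : ℝ) = ((R.erase i).card : ℝ) + 1 := by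
          exact_mod_cast Finset.card_insert_of_notMem hjE
        rw [h, cT]; ring
      simp only [Adiff, Bdiff, eI, eJ, eJI] at key ⊢
      rw [cT, cU, cT2] at key
      linarith
    · -- i ∉ R, j ∈ R
      have eI : R.erase i = R := Finset.erase_eq_self.2 hi
      have eJ : insert j R = R := Finset.insert_eq_self.2 hj
      have cS : ((R.erase j).card : ℝ) = (R.card : ℝ) - 1 := by
        have h : ((R.erase j).card : ℝ) + 1 = R.card := by
          exact_mod_cast Finset.card_erase_add_one hj
        linarith
      have cU : ((insert i R).card : ℝ) = (R.card : ℝ) + 1 := by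
        exact_mod_cast Finset.card_insert_of_notMem hi
      have hjI : j ∈ insert i R := Finset.mem_insert_of_mem hj
      have eJ2 : insert j (insert i R) = insert i R := Finset.insert_eq_self.2 hjI
      have cS2 : (((insert i R).erase j).card : ℝ) = (R.card : ℝ) := by
        have h : (((insert i R).erase j).card : ℝ) + 1 = (insert i R).card := by
          exact_mod_cast Finset.card_erase_add_one hjI
        rw [cU] at h; linarith
      simp only [Adiff, Bdiff, eI, eJ, eJ2] at key ⊢
      rw [cS, cU, cS2] at key
      linarith
    · -- neither in R
      have hjE : j ∉ R.erase i := fun h => hj (Finset.mem_of_mem_erase h)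
      have eI : R.erase i = R := Finset.erase_eq_self.2 hi
      have eJ : R.erase j = R := Finset.erase_eq_self.2 hj
      have cSi : ((insert i R).card : ℝ) = (R.card : ℝ) + 1 := by
        exact_mod_cast Finset.card_insert_of_notMem hi
      have cSj : ((insert j R).card : ℝ) = (R.card : ℝ) + 1 := by
        exact_mod_cast Finset.card_insert_of_notMem hj
      have hjiR : j ∉ insert i R := by
        simp [Finset.mem_insert, hij.symm, hj]
      have cU : ((insert j (insert i R)).card : ℝ) = (R.card : ℝ) + 2 := by
        have h : ((insert j (insert i R)).card : ℝ) = ((insert i R).card : ℝ) + 1 := by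
          exact_mod_cast Finset.card_insert_of_notMem hjiR
        rw [h, cSi]; ring
      have eSi : (insert i R).erase j = insert i R := by
        exact Finset.erase_eq_self.2 hjiR
      simp only [Adiff, Bdiff, eI, eJ, eSi] at key ⊢
      rw [cSi, cSj, cU] at key
      linarith
end

section
/- Let f be a set function and F its multilinear extension. If F is one-sided (γ/2)-smooth, then f is γ-meta-submodular. -/
open Finset

/-- `p_x(R) = ∏_{v∈R} x_v · ∏_{v∉R} (1 - x_v)`. -/
def pw {n : ℕ} (x : Fin n → ℝ) (R : Finset (Fin n)) : ℝ :=
  (∏ v ∈ R, x v) * ∏ v ∈ Rᶜ, (1 - x v)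

/-- `∇_i F(x) = ∑_R B_i(R) p_x(R)` (gradient of the multilinear extension). -/
def gradML {n : ℕ} (f : Finset (Fin n) → ℝ) (x : Fin n → ℝ) (i : Fin n) : ℝ :=
  ∑ R : Finset (Fin n), Bdiff f i R * pw x R

/-- `∇²_{ij} F(x) = ∑_R A_{ij}(R) p_x(R)` (Hessian of the multilinear extension). -/
def hessML {n : ℕ} (f : Finset (Fin n) → ℝ) (x : Fin n → ℝ) (i j : Fin n) : ℝ :=
  ∑ R : Finset (Fin n), Adiff f i j R * pw x R

lemma pw_indic {n : ℕ} (S R : Finset (Fin n)) :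
    pw (fun v => if v ∈ S then (1:ℝ) else 0) R = if R = S then 1 else 0 := by
  unfold pw
  by_cases h : R = S
  · subst h
    rw [if_pos rfl]
    rw [Finset.prod_congr rfl (fun v hv => if_pos hv), Finset.prod_const_one, one_mul]
    apply Finset.prod_eq_one
    intro v hv
    simp [Finset.mem_compl.mp hv]
  · rw [if_neg h]
    have : ¬ (R ⊆ S ∧ S ⊆ R) := fun ⟨h1, h2⟩ => h (Finset.Subset.antisymm h1 h2)
    rcases not_and_or.mp this with h1 | h1
    · obtain ⟨v, hvR, hvS⟩ := Finset.not_subset.mp h1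
      rw [Finset.prod_eq_zero hvR (by simp [hvS]), zero_mul]
    · obtain ⟨v, hvS, hvR⟩ := Finset.not_subset.mp h1
      rw [Finset.prod_eq_zero (Finset.mem_compl.mpr hvR) (by simp [hvS]), mul_zero]

lemma gradML_indic {n : ℕ} (f : Finset (Fin n) → ℝ) (S : Finset (Fin n)) (i : Fin n) :
    gradML f (fun v => if v ∈ S then (1:ℝ) else 0) i = Bdiff f i S := by
  unfold gradML
  simp [pw_indic, mul_ite]

lemma hessML_indic {n : ℕ} (f : Finset (Fin n) → ℝ) (S : Finset (Fin n)) (i j : Fin n) :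
    hessML f (fun v => if v ∈ S then (1:ℝ) else 0) i j = Adiff f i j S := by
  unfold hessML
  simp [pw_indic, mul_ite]

lemma insert_erase_eq {n : ℕ} (i : Fin n) (S : Finset (Fin n)) :
    insert i (S.erase i) = insert i S := by
  ext v; simp [Finset.mem_erase, Finset.mem_insert]; tauto

lemma erase_comm' {n : ℕ} (i j : Fin n) (S : Finset (Fin n)) :
    (S.erase i).erase j = (S.erase j).erase i := by
  ext v; simp [Finset.mem_erase]; tauto

lemma Adiff_self {n : ℕ} (f : Finset (Fin n) → ℝ) (i : Fin n) (S : Finset (Fin n)) :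
    Adiff f i i S = 0 := by
  simp [Adiff, Finset.erase_insert_eq_erase, insert_erase_eq, Finset.insert_idem,
    Finset.erase_idem]

lemma Adiff_symm {n : ℕ} (f : Finset (Fin n) → ℝ) (i j : Fin n) (S : Finset (Fin n))
    (hij : i ≠ j) : Adiff f j i S = Adiff f i j S := by
  unfold Adiff
  rw [Finset.insert_comm, erase_comm',
    Finset.erase_insert_of_ne hij, Finset.erase_insert_of_ne hij.symm]
  ring

lemma sum_indic_mul {n : ℕ} (T : Finset (Fin n)) (g : Fin n → ℝ) :
    ∑ v, (if v ∈ T then (1:ℝ) else 0) * g v = ∑ v ∈ T, g v := by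
  simp [ite_mul, Finset.sum_ite_mem]


/-- If the multilinear extension of `f` is one-sided (γ/2)-smooth, then `f` is
γ-meta-submodular. -/
theorem oneSidedSmooth_implies_metaSubmodular {n : ℕ} (γ : ℝ)
    (f : Finset (Fin n) → ℝ)
    (hsmooth : ∀ x : Fin n → ℝ, (∀ v, x v ∈ Set.Icc (0 : ℝ) 1) → x ≠ 0 →
      ∀ u : Fin n → ℝ, (∀ v, u v ∈ Set.Icc (0 : ℝ) 1) →
        (1 / 2) * ∑ i : Fin n, ∑ j : Fin n, u i * u j * hessML f x i j ≤
          (γ / 2) * ((∑ v, u v) / (∑ v, x v)) * ∑ i : Fin n, u i * gradML f x i) :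
    ∀ S : Finset (Fin n), S.Nonempty → ∀ i j : Fin n,
      Adiff f i j S ≤ γ * (Bdiff f i S + Bdiff f j S) / S.card := by
  intro S hS i j
  obtain ⟨w, hw⟩ := hS
  set x : Fin n → ℝ := fun v => if v ∈ S then (1:ℝ) else 0 with hxdef
  have hx : ∀ v, x v ∈ Set.Icc (0:ℝ) 1 := by
    intro v; simp only [hxdef]; split <;> norm_num
  have hxne : x ≠ 0 := by
    intro h
    have := congrFun h w
    simp [hxdef, hw] at this
  have hxsum : ∑ v, x v = (S.card : ℝ) := by
    simp [hxdef, Finset.sum_ite_mem]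
  have hcard : (0:ℝ) < S.card := by
    have : 0 < S.card := Finset.card_pos.mpr ⟨w, hw⟩
    exact_mod_cast this
  set T : Finset (Fin n) := {i, j} with hTdef
  set u : Fin n → ℝ := fun v => if v ∈ T then (1:ℝ) else 0 with hudef
  have hu : ∀ v, u v ∈ Set.Icc (0:ℝ) 1 := by
    intro v; simp only [hudef]; split <;> norm_num
  have key := hsmooth x hx hxne u hu
  have husum : ∑ v, u v = (T.card : ℝ) := by
    simp [hudef, Finset.sum_ite_mem]
  have h1 : ∀ a, ∑ b : Fin n, u a * u b * hessML f x a b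
      = u a * ∑ b ∈ T, Adiff f a b S := by
    intro a
    calc ∑ b : Fin n, u a * u b * hessML f x a b
        = ∑ b : Fin n, u a * (u b * Adiff f a b S) := by
          refine Finset.sum_congr rfl fun b _ => ?_
          rw [hxdef, hessML_indic]; ring
      _ = u a * ∑ b : Fin n, u b * Adiff f a b S := by rw [Finset.mul_sum]
      _ = u a * ∑ b ∈ T, Adiff f a b S := by
          rw [hudef]; exact congrArg _ (sum_indic_mul T _)
  have h2 : ∑ a : Fin n, ∑ b : Fin n, u a * u b * hessML f x a b
      = ∑ a ∈ T, ∑ b ∈ T, Adiff f a b S := by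
    calc ∑ a : Fin n, ∑ b : Fin n, u a * u b * hessML f x a b
        = ∑ a : Fin n, u a * ∑ b ∈ T, Adiff f a b S :=
          Finset.sum_congr rfl fun a _ => h1 a
      _ = ∑ a ∈ T, ∑ b ∈ T, Adiff f a b S := by
          rw [hudef]; exact sum_indic_mul T _
  have h3 : ∑ a : Fin n, u a * gradML f x a = ∑ a ∈ T, Bdiff f a S := by
    calc ∑ a : Fin n, u a * gradML f x a
        = ∑ a : Fin n, u a * Bdiff f a S := by
          refine Finset.sum_congr rfl fun a _ => ?_
          rw [hxdef, gradML_indic]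
      _ = ∑ a ∈ T, Bdiff f a S := by
          rw [hudef]; exact sum_indic_mul T _
  rw [h2, h3, husum, hxsum] at key
  rcases eq_or_ne i j with hij | hij
  · subst hij
    have hT : T = {i} := by simp [hTdef]
    rw [hT] at key
    simp only [Finset.sum_singleton, Adiff_self, Finset.card_singleton,
      Nat.cast_one, mul_zero] at key
    rw [Adiff_self]
    have heq : γ * (Bdiff f i S + Bdiff f i S) / S.card
        = 4 * (γ / 2 * (1 / (S.card : ℝ)) * Bdiff f i S) := by
      field_simp; ring
    rw [heq]
    linarith
  · have hT2 : (T.card : ℝ) = 2 := by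
      rw [hTdef, Finset.card_pair hij]; norm_num
    rw [hTdef, Finset.sum_pair hij] at key
    rw [Finset.sum_pair hij, Finset.sum_pair hij, Finset.sum_pair hij,
      Adiff_self, Adiff_self, Adiff_symm f i j S hij] at key
    rw [hT2] at key
    have heq : γ / 2 * (2 / (S.card : ℝ)) * (Bdiff f i S + Bdiff f j S)
        = γ * (Bdiff f i S + Bdiff f j S) / S.card := by
      field_simp
    rw [heq] at key
    linarith
end

section
/- Let f be a non-negative monotone set function with multilinear extension F, let x ∈ [0,1]^n with x ≠ 0, and γ ≥ 0. If ‖x‖₁·∇²_{ij}F(x) ≤ γ·(∇_i F(x) + ∇_j F(x)) for all i, j ∈ [n], then for every u ∈ [0,1]^n, uᵀ∇²F(x)u ≤ 2γ·(‖u‖₁/‖x‖₁)·uᵀ∇F(x), i.e., F is one-sided γ-smooth at x. -/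
open Finset

/-- If `‖x‖₁ ∇²_{ij}F(x) ≤ γ(∇_i F(x) + ∇_j F(x))` for all `i,j`, then `F` is
one-sided γ-smooth at `x`: `uᵀ∇²F(x)u ≤ 2γ (‖u‖₁/‖x‖₁) uᵀ∇F(x)` for `u ∈ [0,1]ⁿ`. -/
theorem expectation_ineq_implies_oneSidedSmooth {n : ℕ} (γ : ℝ) (hγ : 0 ≤ γ)
    (f : Finset (Fin n) → ℝ)
    (hnonneg : ∀ S : Finset (Fin n), 0 ≤ f S)
    (hmono : ∀ S T : Finset (Fin n), S ⊆ T → f S ≤ f T)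
    (x : Fin n → ℝ) (hx : ∀ v, x v ∈ Set.Icc (0 : ℝ) 1) (hx0 : x ≠ 0)
    (hexp : ∀ i j : Fin n,
      (∑ v, x v) * hessML f x i j ≤ γ * (gradML f x i + gradML f x j)) :
    ∀ u : Fin n → ℝ, (∀ v, u v ∈ Set.Icc (0 : ℝ) 1) →
      ∑ i : Fin n, ∑ j : Fin n, u i * u j * hessML f x i j ≤
        2 * γ * ((∑ v, u v) / (∑ v, x v)) * ∑ i : Fin n, u i * gradML f x i := by
  intro u hu
  have hX : 0 < ∑ v, x v := by
    have hex : ∃ v, x v ≠ 0 := by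
      by_contra h; push_neg at h; exact hx0 (funext h)
    obtain ⟨v, hv⟩ := hex
    exact Finset.sum_pos' (fun w _ => (hx w).1)
      ⟨v, Finset.mem_univ v, lt_of_le_of_ne (hx v).1 (Ne.symm hv)⟩
  have key : ∀ i j : Fin n, u i * u j * hessML f x i j ≤
      u i * u j * (γ * (gradML f x i + gradML f x j) / (∑ v, x v)) := by
    intro i j
    have huij : 0 ≤ u i * u j := mul_nonneg (hu i).1 (hu j).1
    have h2 : hessML f x i j ≤ γ * (gradML f x i + gradML f x j) / (∑ v, x v) := by
      rw [le_div_iff₀ hX]; linarith [hexp i j]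
    exact mul_le_mul_of_nonneg_left h2 huij
  calc ∑ i : Fin n, ∑ j : Fin n, u i * u j * hessML f x i j
      ≤ ∑ i : Fin n, ∑ j : Fin n,
          u i * u j * (γ * (gradML f x i + gradML f x j) / (∑ v, x v)) :=
        Finset.sum_le_sum (fun i _ => Finset.sum_le_sum (fun j _ => key i j))
    _ = 2 * γ * ((∑ v, u v) / (∑ v, x v)) * ∑ i : Fin n, u i * gradML f x i := by
        have : ∀ i j : Fin n,
            u i * u j * (γ * (gradML f x i + gradML f x j) / (∑ v, x v)) =
            (γ / (∑ v, x v)) * (u j * (u i * gradML f x i))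
              + (γ / (∑ v, x v)) * (u i * (u j * gradML f x j)) := by
          intro i j; field_simp
        simp only [this, Finset.sum_add_distrib, ← Finset.mul_sum, ← Finset.sum_mul]
        field_simp
        ring
end

section
/- Let f be a non-negative, monotone, γ-meta-submodular set function with multilinear extension F, let α ≥ 1 and S ⊆ [n] nonempty. Then for every y with y ≥ 1_S (coordinatewise) and ‖y‖₁ ≤ α|S|, and every u ∈ [0,1]^n: (1/2)·uᵀ∇²F(y)u ≤ αγ·(‖u‖₁/‖y‖₁)·uᵀ∇F(y). That is, F is one-sided αγ-smooth on {y : y ≥ 1_S, ‖y‖₁ ≤ α|S|}. -/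
open Finset

/-- Subdomain smoothness: the multilinear extension of a non-negative, monotone,
γ-meta-submodular function is one-sided αγ-smooth on
`{y : 1_S ≤ y ≤ 1, ‖y‖₁ ≤ α|S|}` for any nonempty `S` and `α ≥ 1`. -/
theorem metaSubmodular_subdomain_smooth {n : ℕ} (γ α : ℝ) (hγ : 0 ≤ γ) (hα : 1 ≤ α)
    (f : Finset (Fin n) → ℝ)
    (hnonneg : ∀ S : Finset (Fin n), 0 ≤ f S)
    (hmono : ∀ S T : Finset (Fin n), S ⊆ T → f S ≤ f T)
    (hms : ∀ S : Finset (Fin n), S.Nonempty → ∀ i j : Fin n,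
      (S.card : ℝ) * Adiff f i j S ≤ γ * (Bdiff f i S + Bdiff f j S))
    (S : Finset (Fin n)) (hS : S.Nonempty) :
    ∀ y : Fin n → ℝ, (∀ v, y v ∈ Set.Icc (0 : ℝ) 1) →
      (∀ v ∈ S, y v = 1) → (∑ v, y v) ≤ α * S.card →
      ∀ u : Fin n → ℝ, (∀ v, u v ∈ Set.Icc (0 : ℝ) 1) →
        (1 / 2) * ∑ i : Fin n, ∑ j : Fin n, u i * u j * hessML f y i j ≤
          α * γ * ((∑ v, u v) / (∑ v, y v)) * ∑ i : Fin n, u i * gradML f y i := by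
  intro y hy hyS hsum u hu
  set T := ∑ v, y v with hT
  set U := ∑ v, u v with hU
  have hScard : (0:ℝ) < S.card := by exact_mod_cast Finset.card_pos.mpr hS
  have hT1 : (S.card : ℝ) ≤ T := by
    have h1 : (S.card : ℝ) = ∑ v ∈ S, y v := by
      rw [Finset.sum_congr rfl hyS]; simp
    rw [h1]
    exact Finset.sum_le_sum_of_subset_of_nonneg (Finset.subset_univ S)
      (fun v _ _ => (hy v).1)
  have hTpos : 0 < T := lt_of_lt_of_le hScard hT1
  have hpwnn : ∀ R : Finset (Fin n), 0 ≤ pw y R := by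
    intro R
    exact mul_nonneg (Finset.prod_nonneg fun v _ => (hy v).1)
      (Finset.prod_nonneg fun v _ => by linarith [(hy v).2])
  have hpw0 : ∀ R : Finset (Fin n), pw y R ≠ 0 → S ⊆ R := by
    intro R hne
    by_contra hsub
    obtain ⟨v, hvS, hvR⟩ := Finset.not_subset.mp hsub
    apply hne
    have : (∏ v ∈ Rᶜ, (1 - y v)) = 0 :=
      Finset.prod_eq_zero (Finset.mem_compl.mpr hvR) (by rw [hyS v hvS]; ring)
    simp [pw, this]
  have hB : ∀ (i : Fin n) (R : Finset (Fin n)), 0 ≤ Bdiff f i R := by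
    intro i R
    have : (R.erase i) ⊆ insert i R :=
      (Finset.erase_subset i R).trans (Finset.subset_insert i R)
    have := hmono _ _ this
    simp [Bdiff]; linarith
  have hUnn : 0 ≤ U := Finset.sum_nonneg fun v _ => (hu v).1
  -- per-R key inequality
  have key : ∀ R : Finset (Fin n),
      pw y R * ((1/2) * ∑ i, ∑ j, u i * u j * Adiff f i j R) ≤
        pw y R * (α * γ * (U / T) * ∑ i, u i * Bdiff f i R) := by
    intro R
    by_cases hz : pw y R = 0
    · simp [hz]
    · have hSR := hpw0 R hz
      have hRne : R.Nonempty := hS.mono hSR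
      have hc : (0:ℝ) < R.card := by exact_mod_cast Finset.card_pos.mpr hRne
      have hTle : T ≤ α * R.card := by
        have : (S.card : ℝ) ≤ R.card := by exact_mod_cast Finset.card_le_card hSR
        calc T ≤ α * S.card := hsum
          _ ≤ α * R.card := by nlinarith
      apply mul_le_mul_of_nonneg_left _ (hpwnn R)
      have step1 : ∑ i, ∑ j, u i * u j * Adiff f i j R ≤
          ∑ i, ∑ j, u i * u j * (γ * (Bdiff f i R + Bdiff f j R) / R.card) := by
        apply Finset.sum_le_sum; intro i _
        apply Finset.sum_le_sum; intro j _
        have hA : Adiff f i j R ≤ γ * (Bdiff f i R + Bdiff f j R) / R.card := by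
          rw [le_div_iff₀ hc]
          calc Adiff f i j R * R.card = (R.card : ℝ) * Adiff f i j R := by ring
            _ ≤ _ := hms R hRne i j
        exact mul_le_mul_of_nonneg_left hA (mul_nonneg (hu i).1 (hu j).1)
      have step2 : ∑ i, ∑ j, u i * u j * (γ * (Bdiff f i R + Bdiff f j R) / R.card)
          = γ / R.card * (2 * U * ∑ i, u i * Bdiff f i R) := by
        have e1 : ∀ i : Fin n, ∑ j, u i * u j * (γ * (Bdiff f i R + Bdiff f j R) / R.card)
            = γ / R.card * (u i * Bdiff f i R * U + u i * ∑ j, u j * Bdiff f j R) := by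
          intro i
          rw [hU, Finset.mul_sum, Finset.mul_sum, ← Finset.sum_add_distrib,
            Finset.mul_sum]
          apply Finset.sum_congr rfl
          intro j _
          field_simp
        rw [Finset.sum_congr rfl fun i _ => e1 i, ← Finset.mul_sum,
          Finset.sum_add_distrib, ← Finset.sum_mul, ← Finset.sum_mul]
        rw [hU]
        ring
      have hBsum : 0 ≤ ∑ i, u i * Bdiff f i R :=
        Finset.sum_nonneg fun i _ => mul_nonneg (hu i).1 (hB i R)
      have step3 : γ / R.card * (2 * U * ∑ i, u i * Bdiff f i R) ≤
          2 * (α * γ * (U / T) * ∑ i, u i * Bdiff f i R) := by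
        have hdiv : γ / R.card ≤ α * γ / T := by
          rw [div_le_div_iff₀ hc hTpos]
          nlinarith
        have h2 : 2 * (α * γ * (U / T) * ∑ i, u i * Bdiff f i R)
            = α * γ / T * (2 * U * ∑ i, u i * Bdiff f i R) := by ring
        rw [h2]
        exact mul_le_mul_of_nonneg_right hdiv (by positivity)
      linarith [step1, step2 ▸ step1, step3]
  -- rewrite both sides as sums over R
  have swap3 : ∀ (g : Fin n → Fin n → Finset (Fin n) → ℝ),
      ∑ i, ∑ j, ∑ R : Finset (Fin n), g i j R
        = ∑ R : Finset (Fin n), ∑ i, ∑ j, g i j R := by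
    intro g
    calc ∑ i, ∑ j, ∑ R : Finset (Fin n), g i j R
        = ∑ i, ∑ R : Finset (Fin n), ∑ j, g i j R :=
          Finset.sum_congr rfl fun i _ => Finset.sum_comm
      _ = ∑ R : Finset (Fin n), ∑ i, ∑ j, g i j R := Finset.sum_comm
  have lhs_eq : (1 / 2) * ∑ i : Fin n, ∑ j : Fin n, u i * u j * hessML f y i j
      = ∑ R : Finset (Fin n), pw y R * ((1/2) * ∑ i, ∑ j, u i * u j * Adiff f i j R) := by
    simp only [hessML, Finset.mul_sum]
    rw [swap3 (fun i j R => 1/2 * (u i * u j * (Adiff f i j R * pw y R)))]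
    exact Finset.sum_congr rfl fun R _ => Finset.sum_congr rfl fun i _ =>
      Finset.sum_congr rfl fun j _ => by ring
  have rhs_eq : α * γ * (U / T) * ∑ i : Fin n, u i * gradML f y i
      = ∑ R : Finset (Fin n), pw y R * (α * γ * (U / T) * ∑ i, u i * Bdiff f i R) := by
    simp only [gradML, Finset.mul_sum]
    rw [Finset.sum_comm]
    exact Finset.sum_congr rfl fun R _ => Finset.sum_congr rfl fun i _ => by ring
  rw [lhs_eq, rhs_eq]
  exact Finset.sum_le_sum fun R _ => key R
end

section
/- Let f be a non-negative, monotone, γ-meta-submodular set function with multilinear extension F, and R ⊆ [n] with |R| ≥ 2. Then Σ_{i∈R} B_i(R\{i}) ≤ ((⌊|R|/2⌋² + ⌈|R|/2⌉²)/(⌊|R|/2⌋·⌈|R|/2⌉) + 2)·γ·f(R) + 2·f(R) ≤ (5γ + 2)·f(R). -/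
open Finset

/-! ### Auxiliary machinery -/

/-- Sum of marginals of the set `W`. -/
noncomputable def Psum {n : ℕ} (f : Finset (Fin n) → ℝ) (W : Finset (Fin n)) : ℝ :=
  ∑ i ∈ W, (f W - f (W.erase i))

/-- Level sum of `f` over `k`-subsets of `R`. -/
noncomputable def Fs {n : ℕ} (f : Finset (Fin n) → ℝ) (R : Finset (Fin n)) (k : ℕ) : ℝ :=
  ∑ W ∈ R.powersetCard k, f W

/-- Level sum of `Psum` over `k`-subsets of `R`. -/
noncomputable def Qs {n : ℕ} (f : Finset (Fin n) → ℝ) (R : Finset (Fin n)) (k : ℕ) : ℝ :=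
  ∑ W ∈ R.powersetCard k, Psum f W

/-- Normalized average marginal at level `k`. -/
noncomputable def gs {n : ℕ} (f : Finset (Fin n) → ℝ) (R : Finset (Fin n)) (k : ℕ) : ℝ :=
  Qs f R k / (k * (R.card.choose k))

lemma Psum_nonneg {n : ℕ} {f : Finset (Fin n) → ℝ}
    (hmono : ∀ S T : Finset (Fin n), S ⊆ T → f S ≤ f T) (W : Finset (Fin n)) :
    0 ≤ Psum f W :=
  Finset.sum_nonneg fun _i _ => sub_nonneg.2 (hmono _ _ (Finset.erase_subset _ _))

lemma Bdiff_mem {n : ℕ} {f : Finset (Fin n) → ℝ} {i : Fin n} {W : Finset (Fin n)}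
    (hi : i ∈ W) : Bdiff f i W = f W - f (W.erase i) := by
  unfold Bdiff; rw [Finset.insert_eq_self.2 hi]

lemma Adiff_diag {n : ℕ} (f : Finset (Fin n) → ℝ) {j : Fin n} {W : Finset (Fin n)}
    (hj : j ∈ W) : Adiff f j j W = 0 := by
  unfold Adiff
  rw [Finset.insert_eq_self.2 hj, Finset.insert_eq_self.2 hj, Finset.insert_erase hj,
    Finset.erase_idem]
  ring

lemma Adiff_offdiag {n : ℕ} (f : Finset (Fin n) → ℝ) {i j : Fin n} {W : Finset (Fin n)}
    (hi : i ∈ W) (hj : j ∈ W) (hij : i ≠ j) :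
    Adiff f i j W = (f W - f (W.erase i)) - (f (W.erase j) - f ((W.erase j).erase i)) := by
  unfold Adiff
  rw [Finset.insert_eq_self.2 hi, Finset.insert_eq_self.2 hj,
    Finset.insert_eq_self.2 (Finset.mem_erase.2 ⟨hij.symm, hj⟩), Finset.erase_right_comm]
  ring

lemma pair_sum {n : ℕ} (f : Finset (Fin n) → ℝ) (W : Finset (Fin n)) :
    ∑ j ∈ W, ∑ i ∈ W, Adiff f i j W
      = (W.card : ℝ) * Psum f W - Psum f W - ∑ j ∈ W, Psum f (W.erase j) := by
  have hinner : ∀ j ∈ W, ∑ i ∈ W, Adiff f i j W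
      = Psum f W - (f W - f (W.erase j)) - Psum f (W.erase j) := by
    intro j hj
    rw [← Finset.sum_erase_add _ _ hj, Adiff_diag f hj, add_zero]
    have h1 : ∑ i ∈ W.erase j, Adiff f i j W
        = ∑ i ∈ W.erase j, ((f W - f (W.erase i)) - (f (W.erase j) - f ((W.erase j).erase i))) := by
      apply Finset.sum_congr rfl
      intro i hi
      exact Adiff_offdiag f (Finset.mem_of_mem_erase hi) hj (Finset.ne_of_mem_erase hi)
    rw [h1, Finset.sum_sub_distrib]
    have h2 : ∑ i ∈ W.erase j, (f W - f (W.erase i)) = Psum f W - (f W - f (W.erase j)) :=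
      Finset.sum_erase_eq_sub hj
    have h3 : ∑ i ∈ W.erase j, (f (W.erase j) - f ((W.erase j).erase i)) = Psum f (W.erase j) := rfl
    rw [h2, h3]
  rw [Finset.sum_congr rfl hinner, Finset.sum_sub_distrib, Finset.sum_sub_distrib,
    Finset.sum_const, nsmul_eq_mul]
  unfold Psum
  ring

/-- Per-set consequence of summing meta-submodularity over all pairs. -/
lemma perW {n : ℕ} (γ : ℝ) (f : Finset (Fin n) → ℝ)
    (hms : ∀ S : Finset (Fin n), S.Nonempty → ∀ i j : Fin n,
      (S.card : ℝ) * Adiff f i j S ≤ γ * (Bdiff f i S + Bdiff f j S))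
    (W : Finset (Fin n)) (hW : W.Nonempty) :
    ((W.card : ℝ) - 1) * Psum f W - ∑ j ∈ W, Psum f (W.erase j) ≤ 2 * γ * Psum f W := by
  have hsum : ∑ j ∈ W, ∑ i ∈ W, ((W.card : ℝ) * Adiff f i j W)
      ≤ ∑ j ∈ W, ∑ i ∈ W, (γ * (Bdiff f i W + Bdiff f j W)) := by
    apply Finset.sum_le_sum; intro j _; apply Finset.sum_le_sum; intro i _
    exact hms W hW i j
  have hB : ∑ i ∈ W, Bdiff f i W = Psum f W := by
    unfold Psum; exact Finset.sum_congr rfl fun i hi => Bdiff_mem hi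
  have hL : ∑ j ∈ W, ∑ i ∈ W, ((W.card : ℝ) * Adiff f i j W)
      = (W.card : ℝ) * ((W.card : ℝ) * Psum f W - Psum f W - ∑ j ∈ W, Psum f (W.erase j)) := by
    rw [← pair_sum]
    rw [Finset.mul_sum]
    exact Finset.sum_congr rfl fun j _ => (Finset.mul_sum _ _ _).symm
  have hRS : ∑ j ∈ W, ∑ i ∈ W, (γ * (Bdiff f i W + Bdiff f j W))
      = 2 * γ * (W.card : ℝ) * Psum f W := by
    have : ∀ j ∈ W, ∑ i ∈ W, (γ * (Bdiff f i W + Bdiff f j W))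
        = γ * (Psum f W + (W.card : ℝ) * Bdiff f j W) := by
      intro j _
      rw [← Finset.mul_sum, Finset.sum_add_distrib, hB, Finset.sum_const, nsmul_eq_mul]
    rw [Finset.sum_congr rfl this, ← Finset.mul_sum, Finset.sum_add_distrib,
      Finset.sum_const, nsmul_eq_mul, ← Finset.mul_sum, hB]
    ring
  rw [hL, hRS] at hsum
  have hcard : (0:ℝ) < (W.card : ℝ) := by
    exact_mod_cast Finset.card_pos.2 hW
  nlinarith [hsum, hcard]

/-- Double counting: summing `h (W.erase j)` over `(k+1)`-subsets. -/
lemma erase_transfer {n : ℕ} (h : Finset (Fin n) → ℝ) (R : Finset (Fin n)) (k : ℕ) :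
    ∑ W ∈ R.powersetCard (k+1), ∑ j ∈ W, h (W.erase j)
      = ((R.card - k : ℕ) : ℝ) * ∑ W ∈ R.powersetCard k, h W := by
  rw [Finset.sum_sigma' (R.powersetCard (k+1)) (fun W => W) (fun W j => h (W.erase j))]
  rw [show ((R.card - k : ℕ) : ℝ) * ∑ W ∈ R.powersetCard k, h W
      = ∑ W ∈ R.powersetCard k, ∑ _j ∈ R \ W, h W from ?_]
  · rw [Finset.sum_sigma' (R.powersetCard k) (fun W => R \ W) (fun W _j => h W)]
    apply Finset.sum_nbij' (fun p => (⟨p.1.erase p.2, p.2⟩ : Σ _W : Finset (Fin n), Fin n))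
      (fun q => (⟨insert q.2 q.1, q.2⟩ : Σ _W : Finset (Fin n), Fin n))
    · rintro ⟨W, j⟩ hp
      rw [Finset.mem_sigma] at hp ⊢
      obtain ⟨hW, hj⟩ := hp
      rw [Finset.mem_powersetCard] at hW
      refine ⟨Finset.mem_powersetCard.2 ⟨(Finset.erase_subset _ _).trans hW.1, ?_⟩, ?_⟩
      · rw [Finset.card_erase_of_mem hj, hW.2]
        omega
      · exact Finset.mem_sdiff.2 ⟨hW.1 hj, Finset.notMem_erase _ _⟩
    · rintro ⟨W, j⟩ hq
      rw [Finset.mem_sigma] at hq ⊢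
      obtain ⟨hW, hj⟩ := hq
      rw [Finset.mem_powersetCard] at hW
      rw [Finset.mem_sdiff] at hj
      refine ⟨Finset.mem_powersetCard.2 ⟨Finset.insert_subset hj.1 hW.1, ?_⟩,
        Finset.mem_insert_self _ _⟩
      rw [Finset.card_insert_of_notMem hj.2, hW.2]
    · rintro ⟨W, j⟩ hp
      rw [Finset.mem_sigma] at hp
      simp only [Finset.insert_erase hp.2]
    · rintro ⟨W, j⟩ hq
      rw [Finset.mem_sigma, Finset.mem_sdiff] at hq
      simp only [Finset.erase_insert hq.2.2]
    · rintro ⟨W, j⟩ hp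
      rfl
  · rw [Finset.sum_congr rfl (fun W hW => Finset.sum_const (h W)), Finset.mul_sum]
    apply Finset.sum_congr rfl
    intro W hW
    rw [Finset.mem_powersetCard] at hW
    rw [Finset.card_sdiff_of_subset hW.1, hW.2, nsmul_eq_mul]

/-- `Q_{k+1} = (k+1) F_{k+1} - (r-k) F_k`. -/
lemma Qs_eq {n : ℕ} (f : Finset (Fin n) → ℝ) (R : Finset (Fin n)) (k : ℕ) :
    Qs f R (k+1) = ((k:ℝ)+1) * Fs f R (k+1) - ((R.card - k : ℕ) : ℝ) * Fs f R k := by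
  have h1 : ∀ W ∈ R.powersetCard (k+1), Psum f W = ((k:ℝ)+1) * f W - ∑ j ∈ W, f (W.erase j) := by
    intro W hW
    rw [Finset.mem_powersetCard] at hW
    unfold Psum
    rw [Finset.sum_sub_distrib, Finset.sum_const, nsmul_eq_mul, hW.2]
    push_cast; ring
  unfold Qs
  rw [Finset.sum_congr rfl h1, Finset.sum_sub_distrib, erase_transfer, ← Finset.mul_sum]
  rfl

/-- Telescoping form of `gs`. -/
lemma gs_eq {n : ℕ} (f : Finset (Fin n) → ℝ) (R : Finset (Fin n)) (k : ℕ)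
    (hk : k + 1 ≤ R.card) :
    gs f R (k+1) = Fs f R (k+1) / (R.card.choose (k+1)) - Fs f R k / (R.card.choose k) := by
  have hch : (R.card.choose (k+1)) * (k+1) = (R.card.choose k) * (R.card - k) :=
    Nat.choose_succ_right_eq R.card k
  have hc1 : (0:ℝ) < (R.card.choose (k+1) : ℝ) := by
    exact_mod_cast Nat.choose_pos hk
  have hc0 : (0:ℝ) < (R.card.choose k : ℝ) := by
    exact_mod_cast Nat.choose_pos (le_trans (Nat.le_succ k) hk)
  have hrk : (0:ℝ) < ((R.card - k : ℕ) : ℝ) := by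
    have : 0 < R.card - k := by omega
    exact_mod_cast this
  have hchR : ((R.card.choose (k+1)) : ℝ) * ((k:ℝ)+1)
      = (R.card.choose k : ℝ) * ((R.card - k : ℕ) : ℝ) := by
    exact_mod_cast congrArg (Nat.cast (R := ℝ)) hch
  unfold gs
  rw [Qs_eq]
  rw [div_sub_div _ _ (ne_of_gt hc1) (ne_of_gt hc0), div_eq_div_iff (by positivity) (by positivity)]
  push_cast
  linear_combination (((R.card.choose (k+1)) : ℝ) * Fs f R k) * hchR

/-- Telescoping: `∑_{k=1}^{r} g_k = f R`. -/
lemma gs_telescope {n : ℕ} (f : Finset (Fin n) → ℝ) (R : Finset (Fin n)) (hf0 : f ∅ = 0) :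
    ∑ i ∈ Finset.range R.card, gs f R (i+1) = f R := by
  have h1 : ∑ i ∈ Finset.range R.card, gs f R (i+1)
      = ∑ i ∈ Finset.range R.card,
          (Fs f R (i+1) / (R.card.choose (i+1)) - Fs f R i / (R.card.choose i)) := by
    apply Finset.sum_congr rfl
    intro i hi
    exact gs_eq f R i (Finset.mem_range.1 hi)
  rw [h1, Finset.sum_range_sub (fun k => Fs f R k / (R.card.choose k))]
  have hFr : Fs f R R.card = f R := by
    unfold Fs
    rw [Finset.powersetCard_self, Finset.sum_singleton]
  have hF0 : Fs f R 0 = 0 := by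
    unfold Fs
    rw [Finset.powersetCard_zero, Finset.sum_singleton, hf0]
  rw [hFr, hF0, Nat.choose_self, Nat.choose_zero_right]
  norm_num

/-- Level recurrence `(m - 2γ) g_{m+1} ≤ m g_m`. -/
lemma gs_rec {n : ℕ} (γ : ℝ) (f : Finset (Fin n) → ℝ) (R : Finset (Fin n))
    (hperW : ∀ W : Finset (Fin n), W.Nonempty →
      ((W.card : ℝ) - 1) * Psum f W - ∑ j ∈ W, Psum f (W.erase j) ≤ 2 * γ * Psum f W)
    (m : ℕ) (hm : 1 ≤ m) (hmr : m + 1 ≤ R.card) :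
    ((m:ℝ) - 2*γ) * gs f R (m+1) ≤ (m:ℝ) * gs f R m := by
  have hQ : (m:ℝ) * Qs f R (m+1) - ((R.card - m : ℕ) : ℝ) * Qs f R m
      ≤ 2 * γ * Qs f R (m+1) := by
    have h1 : ∀ W ∈ R.powersetCard (m+1),
        (m:ℝ) * Psum f W - ∑ j ∈ W, Psum f (W.erase j) ≤ 2 * γ * Psum f W := by
      intro W hW
      rw [Finset.mem_powersetCard] at hW
      have hne : W.Nonempty := Finset.card_pos.1 (by omega)
      have := hperW W hne
      rw [hW.2] at this
      push_cast at this
      linarith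
    have h2 : ∑ W ∈ R.powersetCard (m+1),
        ((m:ℝ) * Psum f W - ∑ j ∈ W, Psum f (W.erase j))
        ≤ ∑ W ∈ R.powersetCard (m+1), 2 * γ * Psum f W :=
      Finset.sum_le_sum h1
    rw [Finset.sum_sub_distrib, ← Finset.mul_sum, erase_transfer (Psum f) R m,
      ← Finset.mul_sum] at h2
    exact h2
  have hch : ((R.card.choose (m+1)) : ℝ) * ((m:ℝ)+1)
      = (R.card.choose m : ℝ) * ((R.card - m : ℕ) : ℝ) := by
    exact_mod_cast congrArg (Nat.cast (R := ℝ)) (Nat.choose_succ_right_eq R.card m)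
  have hc1 : (0:ℝ) < (R.card.choose (m+1) : ℝ) := by exact_mod_cast Nat.choose_pos hmr
  have hc0 : (0:ℝ) < (R.card.choose m : ℝ) := by
    exact_mod_cast Nat.choose_pos (le_trans (Nat.le_succ m) hmr)
  have hrk : (0:ℝ) < ((R.card - m : ℕ) : ℝ) := by
    have : 0 < R.card - m := by omega
    exact_mod_cast this
  have hm0 : (0:ℝ) < (m:ℝ) := by exact_mod_cast hm
  unfold gs
  push_cast
  rw [mul_div_assoc', mul_div_assoc', div_le_div_iff₀ (by positivity) (by positivity)]
  have key : ((m:ℝ) - 2*γ) * Qs f R (m+1) ≤ ((R.card - m : ℕ) : ℝ) * Qs f R m := by linarith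
  calc ((m:ℝ) - 2*γ) * Qs f R (m+1) * ((m:ℝ) * ((R.card.choose m : ℕ) : ℝ))
      ≤ ((R.card - m : ℕ) : ℝ) * Qs f R m * ((m:ℝ) * ((R.card.choose m : ℕ) : ℝ)) :=
        mul_le_mul_of_nonneg_right key (by positivity)
    _ = (m:ℝ) * Qs f R m * (((m:ℝ) + 1) * ((R.card.choose (m+1) : ℕ) : ℝ)) := by
        linear_combination (-((m:ℝ) * Qs f R m)) * hch

/-- The elementary sequence lemma. -/
lemma seq_bound (γ : ℝ) (hγ : 0 ≤ γ) (r : ℕ) (g : ℕ → ℝ)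
    (hpos : ∀ m, 1 ≤ m → m ≤ r → 0 ≤ g m)
    (hrec : ∀ m, 1 ≤ m → m + 1 ≤ r → ((m:ℝ) - 2*γ) * g (m+1) ≤ (m:ℝ) * g m) :
    ∀ m, 1 ≤ m → m ≤ r → (m:ℝ) * g m ≤ (4*γ+2) * ∑ i ∈ Finset.range m, g (i+1) := by
  intro m
  induction m with
  | zero => omega
  | succ p ih =>
    intro _ hpr
    rcases Nat.eq_zero_or_pos p with hp0 | hp1
    · subst hp0
      rw [show (0+1) = 1 from rfl, Finset.sum_range_one]
      have := hpos 1 le_rfl hpr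
      push_cast
      nlinarith
    · have hih := ih hp1 (by omega)
      have hrecp := hrec p hp1 hpr
      have hgp1 := hpos (p+1) (by omega) hpr
      rw [Finset.sum_range_succ]
      push_cast
      nlinarith

/-- Main bound : `Psum f R ≤ (4γ+2) f R`. -/
lemma Psum_le {n : ℕ} (γ : ℝ) (hγ : 0 ≤ γ)
    (f : Finset (Fin n) → ℝ)
    (hf0 : f ∅ = 0)
    (hmono : ∀ S T : Finset (Fin n), S ⊆ T → f S ≤ f T)
    (hms : ∀ S : Finset (Fin n), S.Nonempty → ∀ i j : Fin n,
      (S.card : ℝ) * Adiff f i j S ≤ γ * (Bdiff f i S + Bdiff f j S))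
    (R : Finset (Fin n)) (hR : 1 ≤ R.card) :
    Psum f R ≤ (4*γ+2) * f R := by
  have hpos : ∀ m, 1 ≤ m → m ≤ R.card → 0 ≤ gs f R m := by
    intro m _ _
    unfold gs
    apply div_nonneg
    · exact Finset.sum_nonneg fun W _ => Psum_nonneg hmono W
    · positivity
  have hrec : ∀ m, 1 ≤ m → m + 1 ≤ R.card →
      ((m:ℝ) - 2*γ) * gs f R (m+1) ≤ (m:ℝ) * gs f R m :=
    gs_rec γ f R (perW γ f hms)
  have hmain := seq_bound γ hγ R.card (gs f R) hpos hrec R.card hR le_rfl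
  rw [gs_telescope f R hf0] at hmain
  have hgr : (R.card : ℝ) * gs f R R.card = Psum f R := by
    unfold gs Qs
    rw [Finset.powersetCard_self, Finset.sum_singleton, Nat.choose_self]
    have hr0 : (R.card : ℝ) ≠ 0 := by
      have : 0 < R.card := hR
      positivity
    field_simp
    simp
  rw [hgr] at hmain
  exact hmain

/-- For a non-negative, monotone, γ-meta-submodular `f` and `|R| ≥ 2`:
`∑_{i∈R} B_i(R\{i}) ≤ ((⌊|R|/2⌋² + ⌈|R|/2⌉²)/(⌊|R|/2⌋⌈|R|/2⌉) + 2)γ f(R) + 2 f(R)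
 ≤ (5γ + 2) f(R)`. -/
theorem sum_marginals_le {n : ℕ} (γ : ℝ) (hγ : 0 ≤ γ)
    (f : Finset (Fin n) → ℝ)
    (hnonneg : ∀ S : Finset (Fin n), 0 ≤ f S) (hf0 : f ∅ = 0)
    (hmono : ∀ S T : Finset (Fin n), S ⊆ T → f S ≤ f T)
    (hms : ∀ S : Finset (Fin n), S.Nonempty → ∀ i j : Fin n,
      (S.card : ℝ) * Adiff f i j S ≤ γ * (Bdiff f i S + Bdiff f j S))
    (R : Finset (Fin n)) (hR : 2 ≤ R.card) :
    (∑ i ∈ R, Bdiff f i (R.erase i)) ≤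
        (((R.card / 2 : ℕ) ^ 2 + ((R.card + 1) / 2 : ℕ) ^ 2 : ℝ) /
            ((R.card / 2 : ℕ) * ((R.card + 1) / 2 : ℕ) : ℝ) + 2) * γ * f R
          + 2 * f R ∧
      (((R.card / 2 : ℕ) ^ 2 + ((R.card + 1) / 2 : ℕ) ^ 2 : ℝ) /
            ((R.card / 2 : ℕ) * ((R.card + 1) / 2 : ℕ) : ℝ) + 2) * γ * f R
          + 2 * f R ≤ (5 * γ + 2) * f R := by
  have hLHS : (∑ i ∈ R, Bdiff f i (R.erase i)) = Psum f R := by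
    unfold Psum
    apply Finset.sum_congr rfl
    intro i hi
    unfold Bdiff
    rw [Finset.insert_erase hi, Finset.erase_idem]
  have hkey : Psum f R ≤ (4*γ+2) * f R :=
    Psum_le γ hγ f hf0 hmono hms R (by omega)
  set A : ℝ := ((R.card / 2 : ℕ) : ℝ) with hA
  set B : ℝ := (((R.card + 1) / 2 : ℕ) : ℝ) with hB
  have hA1 : (1:ℝ) ≤ A := by
    rw [hA]; exact_mod_cast (by omega : 1 ≤ R.card / 2)
  have hB1 : (1:ℝ) ≤ B := by
    rw [hB]; exact_mod_cast (by omega : 1 ≤ (R.card + 1) / 2)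
  have hAB : A ≤ B := by
    rw [hA, hB]; exact_mod_cast (by omega : R.card / 2 ≤ (R.card + 1) / 2)
  have hBA : B ≤ A + 1 := by
    rw [hA, hB]
    have : (R.card + 1) / 2 ≤ R.card / 2 + 1 := by omega
    exact_mod_cast this
  have hABpos : (0:ℝ) < A * B := by nlinarith
  set C : ℝ := (A ^ 2 + B ^ 2) / (A * B) with hC
  have hC2 : 2 ≤ C := by
    rw [hC, le_div_iff₀ hABpos]
    nlinarith [sq_nonneg (A - B)]
  have hC3 : C ≤ 3 := by
    rw [hC, div_le_iff₀ hABpos]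
    nlinarith
  have hfR : 0 ≤ f R := hnonneg R
  have hγf : 0 ≤ γ * f R := mul_nonneg hγ hfR
  constructor
  · rw [hLHS]
    calc Psum f R ≤ (4*γ+2) * f R := hkey
      _ ≤ (C + 2) * γ * f R + 2 * f R := by nlinarith
  · nlinarith
end

section
/- Let x ∈ [0,1]^n \ {0}, u ∈ [0,1]^n, and ε > 0 with x + εu ∈ [0,1]^n. Let F : [0,1]^n → ℝ be a non-negative, monotone, twice continuously differentiable function that is one-sided σ-smooth on the box {y : x ≤ y ≤ x + εu}. Then uᵀ∇F(x+εu) ≤ (‖x+εu‖₁/‖x‖₁)^{2σ}·uᵀ∇F(x). -/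
open Finset

/-- Grönwall-type comparison: if `g' S ≤ 2σ c g` with `S t = A + t c`, then
`g ε ≤ (S ε / A)^(2σ) g 0`. -/
theorem aux_gronwall (σ ε A c : ℝ) (hσ : 0 ≤ σ) (hε : 0 < ε) (hA : 0 < A) (hc : 0 ≤ c)
    (g g' : ℝ → ℝ)
    (hg : ∀ t, HasDerivAt g (g' t) t)
    (hgnn : ∀ t ∈ Set.Icc 0 ε, 0 ≤ g t)
    (hineq : ∀ t ∈ Set.Ioo 0 ε, g' t * (A + t * c) ≤ 2 * σ * c * g t) :
    g ε ≤ ((A + ε * c) / A) ^ (2 * σ) * g 0 := by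
  have hS : ∀ t : ℝ, 0 ≤ t → 0 < A + t * c := fun t ht => by nlinarith
  have hSd : ∀ t : ℝ, HasDerivAt (fun s : ℝ => A + s * c) c t := fun t => by
    simpa using ((hasDerivAt_id t).mul_const c).const_add A
  have hh : ∀ t : ℝ, 0 ≤ t → HasDerivAt (fun s => g s * (A + s * c) ^ (-(2 * σ)))
      (g' t * (A + t * c) ^ (-(2 * σ))
        + g t * ((-(2 * σ)) * (A + t * c) ^ (-(2 * σ) - 1) * c)) t := by
    intro t ht
    exact (hg t).mul (by have := (Real.hasDerivAt_rpow_const (p := -(2 * σ)) (Or.inl (hS t ht).ne')).comp t (hSd t); exact this)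
  have hanti : AntitoneOn (fun s => g s * (A + s * c) ^ (-(2 * σ))) (Set.Icc 0 ε) := by
    apply antitoneOn_of_deriv_nonpos (convex_Icc 0 ε)
    · exact fun t ht => (hh t ht.1).continuousAt.continuousWithinAt
    · intro t ht; rw [interior_Icc] at ht
      exact (hh t ht.1.le).differentiableAt.differentiableWithinAt
    · intro t ht; rw [interior_Icc] at ht
      rw [(hh t ht.1.le).deriv]
      have hSt := hS t ht.1.le
      have h1 := hineq t ht
      have hSp : (0:ℝ) < (A + t * c) ^ (-(2 * σ)) := Real.rpow_pos_of_pos hSt _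
      have hrw : (A + t * c) ^ (-(2 * σ) - 1)
          = (A + t * c) ^ (-(2 * σ)) / (A + t * c) := by
        rw [Real.rpow_sub hSt, Real.rpow_one]
      rw [hrw]
      have h3 : g' t ≤ 2 * σ * c * g t / (A + t * c) := (le_div_iff₀ hSt).2 h1
      have h2 : g' t * (A + t * c) ^ (-(2 * σ))
          ≤ (2 * σ * c * g t / (A + t * c)) * (A + t * c) ^ (-(2 * σ)) :=
        mul_le_mul_of_nonneg_right h3 hSp.le
      have h4 : (2 * σ * c * g t / (A + t * c)) * (A + t * c) ^ (-(2 * σ))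
          = - (g t * ((-(2 * σ)) * ((A + t * c) ^ (-(2 * σ)) / (A + t * c)) * c)) := by
        ring
      linarith
  have hfinal := hanti (Set.left_mem_Icc.2 hε.le) (Set.right_mem_Icc.2 hε.le) hε.le
  simp only [zero_mul, add_zero] at hfinal
  -- hfinal : g ε * (A + ε*c) ^ (-(2σ)) ≤ g 0 * A ^ (-(2σ))
  have hSε : 0 < A + ε * c := hS ε hε.le
  have hcancel : (A + ε * c) ^ (-(2 * σ)) * (A + ε * c) ^ (2 * σ) = 1 := by
    rw [← Real.rpow_add hSε]; simp
  have hdiv : ((A + ε * c) / A) ^ (2 * σ)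
      = (A + ε * c) ^ (2 * σ) * A ^ (-(2 * σ)) := by
    rw [Real.div_rpow hSε.le hA.le, Real.rpow_neg hA.le, div_eq_mul_inv]
  calc g ε = (g ε * (A + ε * c) ^ (-(2 * σ))) * (A + ε * c) ^ (2 * σ) := by
        rw [mul_assoc, hcancel, mul_one]
    _ ≤ (g 0 * A ^ (-(2 * σ))) * (A + ε * c) ^ (2 * σ) :=
        mul_le_mul_of_nonneg_right hfinal (Real.rpow_nonneg hSε.le _)
    _ = ((A + ε * c) / A) ^ (2 * σ) * g 0 := by rw [hdiv]; ring

/-- If a non-negative, monotone, C² function `F` is one-sided σ-smooth on the box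
`{y : x ≤ y ≤ x + εu}`, then `uᵀ∇F(x+εu) ≤ (‖x+εu‖₁/‖x‖₁)^{2σ} uᵀ∇F(x)`. -/
theorem grad_ratio_bound {n : ℕ} (σ ε : ℝ) (hσ : 0 ≤ σ) (hε : 0 < ε)
    (F : (Fin n → ℝ) → ℝ) (hF : ContDiff ℝ 2 F)
    (x u : Fin n → ℝ)
    (hx : ∀ v, x v ∈ Set.Icc (0 : ℝ) 1) (hx0 : x ≠ 0)
    (hu : ∀ v, u v ∈ Set.Icc (0 : ℝ) 1)
    (hxu : ∀ v, x v + ε * u v ∈ Set.Icc (0 : ℝ) 1)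
    (hFnonneg : ∀ y : Fin n → ℝ, 0 ≤ F y)
    (hFmono : ∀ (y : Fin n → ℝ) (i : Fin n), 0 ≤ fderiv ℝ F y (Pi.single i 1))
    (hsmooth : ∀ y : Fin n → ℝ, (∀ v, x v ≤ y v ∧ y v ≤ x v + ε * u v) →
      ∀ w : Fin n → ℝ, (∀ v, w v ∈ Set.Icc (0 : ℝ) 1) →
        (1 / 2) * fderiv ℝ (fun z => fderiv ℝ F z w) y w ≤
          σ * ((∑ v, w v) / (∑ v, y v)) * fderiv ℝ F y w) :
    fderiv ℝ F (x + ε • u) u ≤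
      ((∑ v, (x v + ε * u v)) / (∑ v, x v)) ^ (2 * σ) * fderiv ℝ F x u := by
  classical
  have hxnn : ∀ v, 0 ≤ x v := fun v => (hx v).1
  have hunn : ∀ v, 0 ≤ u v := fun v => (hu v).1
  have hA0 : 0 < ∑ v, x v := by
    obtain ⟨v, hv⟩ : ∃ v, x v ≠ 0 := by
      by_contra h; push_neg at h; exact hx0 (funext fun v => h v)
    exact Finset.sum_pos' (fun i _ => hxnn i)
      ⟨v, mem_univ v, lt_of_le_of_ne (hxnn v) (Ne.symm hv)⟩
  have hc0 : (0:ℝ) ≤ ∑ v, u v := Finset.sum_nonneg fun i _ => hunn i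
  -- differentiability of z ↦ fderiv F z u
  have hG1 : ContDiff ℝ 1 (fun z => fderiv ℝ F z u) :=
    (hF.fderiv_right (by norm_num)).clm_apply contDiff_const
  have hGdiff : Differentiable ℝ (fun z => fderiv ℝ F z u) := hG1.differentiable one_ne_zero
  have hγ : ∀ t : ℝ, HasDerivAt (fun s : ℝ => x + s • u) u t := by
    intro t
    have : HasDerivAt (fun s : ℝ => s • u) ((1 : ℝ) • u) t :=
      (hasDerivAt_id t).smul_const u
    simpa using this.const_add x
  have hg : ∀ t : ℝ, HasDerivAt (fun s => fderiv ℝ F (x + s • u) u)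
      (fderiv ℝ (fun z => fderiv ℝ F z u) (x + t • u) u) t := fun t =>
    by have := ((hGdiff (x + t • u)).hasFDerivAt).comp_hasDerivAt t (hγ t); exact this
  -- nonnegativity of fderiv F y u
  have hgnn : ∀ y : Fin n → ℝ, 0 ≤ fderiv ℝ F y u := by
    intro y
    have hu_exp : u = ∑ v, u v • (Pi.single v (1 : ℝ) : Fin n → ℝ) := by
      conv_lhs => rw [← Finset.univ_sum_single u]
      refine Finset.sum_congr rfl fun v _ => ?_
      rw [← Pi.single_smul, smul_eq_mul, mul_one]
    calc (0:ℝ) ≤ ∑ v, u v * fderiv ℝ F y (Pi.single v 1) :=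
          Finset.sum_nonneg fun v _ => mul_nonneg (hunn v) (hFmono y v)
      _ = fderiv ℝ F y u := by
          conv_rhs => rw [hu_exp]
          rw [map_sum]
          refine Finset.sum_congr rfl fun v _ => ?_
          rw [ContinuousLinearMap.map_smul, smul_eq_mul]
  -- the differential inequality
  have hineq : ∀ t ∈ Set.Ioo (0:ℝ) ε,
      fderiv ℝ (fun z => fderiv ℝ F z u) (x + t • u) u * ((∑ v, x v) + t * ∑ v, u v)
        ≤ 2 * σ * (∑ v, u v) * fderiv ℝ F (x + t • u) u := by
    intro t ht
    obtain ⟨ht0, htε⟩ := ht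
    have hy : ∀ v, x v ≤ (x + t • u) v ∧ (x + t • u) v ≤ x v + ε * u v := by
      intro v
      have h1 : 0 ≤ t * u v := mul_nonneg ht0.le (hunn v)
      have h2 : t * u v ≤ ε * u v := mul_le_mul_of_nonneg_right htε.le (hunn v)
      constructor <;> simp <;> linarith
    have hSy : (∑ v, (x + t • u) v) = (∑ v, x v) + t * ∑ v, u v := by
      simp [Finset.sum_add_distrib, ← Finset.mul_sum]
    have hkey := hsmooth (x + t • u) hy u hu
    rw [hSy] at hkey
    have hSt : (0:ℝ) < (∑ v, x v) + t * ∑ v, u v := by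
      have : 0 ≤ t * ∑ v, u v := mul_nonneg ht0.le hc0
      linarith
    have h5 := mul_le_mul_of_nonneg_right hkey hSt.le
    have h6 : σ * ((∑ v, u v) / ((∑ v, x v) + t * ∑ v, u v)) * fderiv ℝ F (x + t • u) u
        * ((∑ v, x v) + t * ∑ v, u v)
        = σ * (∑ v, u v) * fderiv ℝ F (x + t • u) u := by
      field_simp
    rw [h6] at h5
    nlinarith [h5]
  have hmain := aux_gronwall σ ε (∑ v, x v) (∑ v, u v) hσ hε hA0 hc0
    (fun s => fderiv ℝ F (x + s • u) u)
    (fun t => fderiv ℝ (fun z => fderiv ℝ F z u) (x + t • u) u)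
    hg (fun t _ => hgnn _) hineq
  simp only [zero_smul, add_zero] at hmain
  have hSsum : (∑ v, (x v + ε * u v)) = (∑ v, x v) + ε * ∑ v, u v := by
    simp [Finset.sum_add_distrib, ← Finset.mul_sum]
  rw [hSsum]
  exact hmain
end

section
/- Let f be a non-negative, monotone, second-order submodular set function with f(∅)=0 and multilinear extension F. Then for every x ∈ [0,1]^n, xᵀ∇²F(x)x ≤ 2·F(x). -/
open Finset

/-- The multilinear extension `F(x) = ∑_R f(R) p_x(R)`. -/
def mlExt {n : ℕ} (f : Finset (Fin n) → ℝ) (x : Fin n → ℝ) : ℝ :=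
  ∑ R : Finset (Fin n), f R * pw x R

/- ---------------- Auxiliary lemmas ---------------- -/

lemma insert_erase_self' {α : Type*} [DecidableEq α] (a : α) (s : Finset α) :
    insert a (s.erase a) = insert a s := by
  ext x; simp only [Finset.mem_insert, Finset.mem_erase]; tauto

lemma Adiff_eq_Bdiff {n : ℕ} (f : Finset (Fin n) → ℝ) (i j : Fin n) (S : Finset (Fin n)) :
    Adiff f i j S = Bdiff f j (insert i S) - Bdiff f j (S.erase i) := by
  simp only [Adiff, Bdiff]; ring

lemma Bdiff_insert_self {n : ℕ} (f : Finset (Fin n) → ℝ) (j : Fin n) (S : Finset (Fin n)) :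
    Bdiff f j (insert j S) = Bdiff f j S := by
  simp only [Bdiff, Finset.insert_idem, Finset.erase_insert_eq_erase]

lemma Bdiff_erase_self {n : ℕ} (f : Finset (Fin n) → ℝ) (j : Fin n) (S : Finset (Fin n)) :
    Bdiff f j (S.erase j) = Bdiff f j S := by
  simp only [Bdiff, insert_erase_self', Finset.erase_idem]

lemma Adiff_insert_left {n : ℕ} (f : Finset (Fin n) → ℝ) (i j : Fin n) (S : Finset (Fin n)) :
    Adiff f i j (insert i S) = Adiff f i j S := by
  rw [Adiff_eq_Bdiff, Adiff_eq_Bdiff, Finset.insert_idem, Finset.erase_insert_eq_erase]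

lemma Adiff_erase_left {n : ℕ} (f : Finset (Fin n) → ℝ) (i j : Fin n) (S : Finset (Fin n)) :
    Adiff f i j (S.erase i) = Adiff f i j S := by
  rw [Adiff_eq_Bdiff, Adiff_eq_Bdiff, insert_erase_self', Finset.erase_idem]

lemma Adiff_insert_right {n : ℕ} (f : Finset (Fin n) → ℝ) (i j : Fin n) (S : Finset (Fin n)) :
    Adiff f i j (insert j S) = Adiff f i j S := by
  by_cases h : i = j
  · subst h; rw [Adiff_self, Adiff_self]
  · rw [Adiff_eq_Bdiff, Adiff_eq_Bdiff, Finset.insert_comm, Bdiff_insert_self,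
      Finset.erase_insert_of_ne (Ne.symm h), Bdiff_insert_self]

lemma Adiff_erase_right {n : ℕ} (f : Finset (Fin n) → ℝ) (i j : Fin n) (S : Finset (Fin n)) :
    Adiff f i j (S.erase j) = Adiff f i j S := by
  by_cases h : i = j
  · subst h; rw [Adiff_self, Adiff_self]
  · rw [Adiff_eq_Bdiff, Adiff_eq_Bdiff, ← Finset.erase_insert_of_ne h, Bdiff_erase_self,
      Finset.erase_right_comm, Bdiff_erase_self]

lemma Adiff_comm {n : ℕ} (f : Finset (Fin n) → ℝ) (i j : Fin n) (S : Finset (Fin n)) :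
    Adiff f i j S = Adiff f j i S := by
  by_cases h : i = j
  · subst h; rfl
  · unfold Adiff
    rw [Finset.insert_comm, Finset.erase_insert_of_ne h, ← Finset.erase_insert_of_ne (Ne.symm h),
      Finset.erase_right_comm]
    ring

/-- Key submodularity-style lemma: `∑_{s∈R} A_{s,t}(R) ≤ B_t(R) - B_t(∅)`. -/
lemma sum_Adiff_le {n : ℕ} (f : Finset (Fin n) → ℝ)
    (h2nd : ∀ (i j k : Fin n) (S : Finset (Fin n)),
      Adiff f i j (insert k S) ≤ Adiff f i j (S.erase k))
    (t : Fin n) (R : Finset (Fin n)) :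
    ∑ s ∈ R, Adiff f s t R ≤ Bdiff f t R - Bdiff f t ∅ := by
  induction R using Finset.induction_on with
  | empty => simp
  | @insert a R ha ih =>
    rw [Finset.sum_insert ha]
    have h1 : Adiff f a t (insert a R) = Bdiff f t (insert a R) - Bdiff f t R := by
      rw [Adiff_insert_left, Adiff_eq_Bdiff, Finset.erase_eq_of_notMem ha]
    have h2 : ∑ s ∈ R, Adiff f s t (insert a R) ≤ ∑ s ∈ R, Adiff f s t R := by
      apply Finset.sum_le_sum
      intro s _
      have := h2nd s t a R
      rwa [Finset.erase_eq_of_notMem ha] at this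
    linarith

/-- Pointwise combinatorial bound (refined form). -/
lemma key_aux {n : ℕ} (f : Finset (Fin n) → ℝ) (hf0 : f ∅ = 0)
    (h2nd : ∀ (i j k : Fin n) (S : Finset (Fin n)),
      Adiff f i j (insert k S) ≤ Adiff f i j (S.erase k))
    (R : Finset (Fin n)) :
    ∑ i ∈ R, ∑ j ∈ R, Adiff f i j R ≤ 2 * (f R - ∑ v ∈ R, f {v}) := by
  induction R using Finset.induction_on with
  | empty => simp [hf0]
  | @insert a R ha ih =>
    have hsum : ∑ i ∈ insert a R, ∑ j ∈ insert a R, Adiff f i j (insert a R)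
        = 2 * ∑ s ∈ R, Adiff f s a R + ∑ i ∈ R, ∑ j ∈ R, Adiff f i j (insert a R) := by
      rw [Finset.sum_insert ha, Finset.sum_insert ha, Adiff_self]
      have h1 : ∀ j ∈ R, Adiff f a j (insert a R) = Adiff f j a R := by
        intro j _
        rw [Adiff_insert_left, Adiff_comm]
      have h2 : ∀ i ∈ R, Adiff f i a (insert a R) = Adiff f i a R := by
        intro i _
        rw [Adiff_insert_right]
      rw [Finset.sum_congr rfl h1]
      have h3 : ∀ i ∈ R, ∑ j ∈ insert a R, Adiff f i j (insert a R)
          = Adiff f i a R + ∑ j ∈ R, Adiff f i j (insert a R) := by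
        intro i hi
        rw [Finset.sum_insert ha, Adiff_insert_right]
      rw [Finset.sum_congr rfl h3, Finset.sum_add_distrib]
      ring
    have hA : ∑ s ∈ R, Adiff f s a R ≤ f (insert a R) - f R - f {a} := by
      have := sum_Adiff_le f h2nd a R
      have hB1 : Bdiff f a R = f (insert a R) - f R := by
        rw [Bdiff, Finset.erase_eq_of_notMem ha]
      have hB2 : Bdiff f a ∅ = f {a} := by
        simp [Bdiff, hf0]
      linarith
    have hrest : ∑ i ∈ R, ∑ j ∈ R, Adiff f i j (insert a R)
        ≤ ∑ i ∈ R, ∑ j ∈ R, Adiff f i j R := by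
      apply Finset.sum_le_sum
      intro i _
      apply Finset.sum_le_sum
      intro j _
      have := h2nd i j a R
      rwa [Finset.erase_eq_of_notMem ha] at this
    rw [hsum, Finset.sum_insert ha]
    linarith

/-- Pointwise combinatorial bound: `∑_{i,j∈R} A_{ij}(R) ≤ 2 f(R)`. -/
lemma key_bound {n : ℕ} (f : Finset (Fin n) → ℝ)
    (hnonneg : ∀ S : Finset (Fin n), 0 ≤ f S) (hf0 : f ∅ = 0)
    (h2nd : ∀ (i j k : Fin n) (S : Finset (Fin n)),
      Adiff f i j (insert k S) ≤ Adiff f i j (S.erase k))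
    (R : Finset (Fin n)) :
    ∑ i ∈ R, ∑ j ∈ R, Adiff f i j R ≤ 2 * f R := by
  have h := key_aux f hf0 h2nd R
  have : (0:ℝ) ≤ ∑ v ∈ R, f {v} := Finset.sum_nonneg fun v _ => hnonneg _
  linarith

/-- Splitting a sum over all subsets according to membership of `i`. -/
lemma sum_split {n : ℕ} (i : Fin n) (φ : Finset (Fin n) → ℝ) :
    ∑ R : Finset (Fin n), φ R
      = ∑ S ∈ Finset.univ.filter (fun S : Finset (Fin n) => i ∉ S), (φ S + φ (insert i S)) := by
  rw [Finset.sum_add_distrib]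
  rw [← Finset.sum_filter_add_sum_filter_not Finset.univ (fun S => i ∈ S) φ, add_comm]
  congr 1
  apply Finset.sum_nbij' (fun S => S.erase i) (fun S => insert i S)
  · intro S hS
    simp only [Finset.mem_filter, Finset.mem_univ, true_and] at hS ⊢
    simp
  · intro S hS
    simp only [Finset.mem_filter, Finset.mem_univ, true_and] at hS ⊢
    simp [hS]
  · intro S hS
    simp only [Finset.mem_filter, Finset.mem_univ, true_and] at hS
    exact Finset.insert_erase hS
  · intro S hS
    simp only [Finset.mem_filter, Finset.mem_univ, true_and] at hS
    exact Finset.erase_insert hS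
  · intro S hS
    simp only [Finset.mem_filter, Finset.mem_univ, true_and] at hS
    rw [Finset.insert_erase hS]

/-- Marginalization identity. -/
lemma marg {n : ℕ} (x : Fin n → ℝ) (i : Fin n) (g : Finset (Fin n) → ℝ)
    (hg : ∀ R, g (insert i R) = g (R.erase i)) :
    ∑ R : Finset (Fin n), x i * g R * pw x R
      = ∑ R : Finset (Fin n), (if i ∈ R then g R else 0) * pw x R := by
  rw [sum_split i (fun R => x i * g R * pw x R),
    sum_split i (fun R => (if i ∈ R then g R else 0) * pw x R)]
  apply Finset.sum_congr rfl
  intro S hS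
  simp only [Finset.mem_filter, Finset.mem_univ, true_and] at hS
  have hw1 : pw x (insert i S) = x i * ((∏ v ∈ S, x v) * ∏ v ∈ (insert i S)ᶜ, (1 - x v)) := by
    rw [pw, Finset.prod_insert hS]; ring
  have hw2 : pw x S = (1 - x i) * ((∏ v ∈ S, x v) * ∏ v ∈ (insert i S)ᶜ, (1 - x v)) := by
    have h1 : Sᶜ = insert i ((insert i S)ᶜ) := by
      rw [Finset.compl_insert, Finset.insert_erase (Finset.mem_compl.2 hS)]
    rw [pw, h1, Finset.prod_insert (by simp)]
    ring
  have hg1 : g (insert i S) = g S := by rw [hg S, Finset.erase_eq_of_notMem hS]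
  have hmem : i ∈ insert i S := Finset.mem_insert_self i S
  simp only [hw1, hw2, hg1, if_pos hmem, if_neg hS]
  ring

/-- For a non-negative, monotone, second-order submodular `f` with `f(∅)=0` and
multilinear extension `F`: `xᵀ∇²F(x)x ≤ 2 F(x)` for all `x ∈ [0,1]ⁿ`. -/
theorem secondOrderSubmodular_quadratic_bound {n : ℕ}
    (f : Finset (Fin n) → ℝ)
    (hnonneg : ∀ S : Finset (Fin n), 0 ≤ f S) (hf0 : f ∅ = 0)
    (hmono : ∀ S T : Finset (Fin n), S ⊆ T → f S ≤ f T)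
    (h2nd : ∀ (i j k : Fin n) (S : Finset (Fin n)),
      Adiff f i j (insert k S) ≤ Adiff f i j (S.erase k)) :
    ∀ x : Fin n → ℝ, (∀ v, x v ∈ Set.Icc (0 : ℝ) 1) →
      ∑ i : Fin n, ∑ j : Fin n, x i * x j * hessML f x i j ≤ 2 * mlExt f x := by
  intro x hx
  have hpw : ∀ R : Finset (Fin n), 0 ≤ pw x R := by
    intro R
    apply mul_nonneg
    · exact Finset.prod_nonneg fun v _ => (hx v).1
    · exact Finset.prod_nonneg fun v _ => by have := (hx v).2; linarith
  -- Step 1: marginalize the x-factors into membership indicators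
  have hij : ∀ i j : Fin n, x i * x j * hessML f x i j
      = ∑ R : Finset (Fin n),
          (if i ∈ R then (if j ∈ R then Adiff f i j R else 0) else 0) * pw x R := by
    intro i j
    have h1 : x i * x j * hessML f x i j
        = ∑ R : Finset (Fin n), x j * (x i * Adiff f i j R) * pw x R := by
      rw [hessML, Finset.mul_sum]
      apply Finset.sum_congr rfl
      intro R _
      ring
    have hgj : ∀ R : Finset (Fin n),
        x i * Adiff f i j (insert j R) = x i * Adiff f i j (R.erase j) := by
      intro R
      rw [Adiff_insert_right, Adiff_erase_right]
    rw [h1, marg x j (fun R => x i * Adiff f i j R) hgj]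
    have h2 : ∀ R : Finset (Fin n),
        (if j ∈ R then x i * Adiff f i j R else 0) * pw x R
          = x i * (if j ∈ R then Adiff f i j R else 0) * pw x R := by
      intro R
      split_ifs <;> ring
    rw [Finset.sum_congr rfl fun R _ => h2 R]
    have hgi : ∀ R : Finset (Fin n),
        (if j ∈ insert i R then Adiff f i j (insert i R) else 0)
          = (if j ∈ R.erase i then Adiff f i j (R.erase i) else 0) := by
      intro R
      by_cases hij' : i = j
      · subst hij'
        simp [Adiff_self]
      · by_cases hjR : j ∈ R
        · rw [if_pos (Finset.mem_insert_of_mem hjR),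
            if_pos (Finset.mem_erase.2 ⟨Ne.symm hij', hjR⟩),
            Adiff_insert_left, Adiff_erase_left]
        · rw [if_neg (by simp [hjR, Ne.symm hij']),
            if_neg (by simp [hjR])]
    exact marg x i (fun R => if j ∈ R then Adiff f i j R else 0) hgi
  -- Step 2: rearrange triple sum
  have hswap : ∑ i : Fin n, ∑ j : Fin n, x i * x j * hessML f x i j
      = ∑ R : Finset (Fin n),
          (∑ i ∈ R, ∑ j ∈ R, Adiff f i j R) * pw x R := by
    rw [Finset.sum_congr rfl fun i _ => Finset.sum_congr rfl fun j _ => hij i j]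
    rw [Finset.sum_congr rfl fun i _ => Finset.sum_comm (s := Finset.univ) (t := Finset.univ)]
    rw [Finset.sum_comm]
    apply Finset.sum_congr rfl
    intro R _
    simp only [← Finset.sum_mul]
    congr 1
    have hite : ∀ (c : Prop) [Decidable c] (Y : Fin n → ℝ),
        ∑ j : Fin n, (if c then Y j else 0) = if c then ∑ j : Fin n, Y j else 0 := by
      intro c _ Y
      split_ifs <;> simp
    calc ∑ i : Fin n, ∑ j : Fin n, (if i ∈ R then (if j ∈ R then Adiff f i j R else 0) else 0)
        = ∑ i : Fin n, (if i ∈ R then ∑ j : Fin n, (if j ∈ R then Adiff f i j R else 0) else 0) := by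
          exact Finset.sum_congr rfl fun i _ => hite (i ∈ R) _
      _ = ∑ i ∈ R, ∑ j : Fin n, (if j ∈ R then Adiff f i j R else 0) := by
          rw [Finset.sum_ite_mem, Finset.univ_inter]
      _ = ∑ i ∈ R, ∑ j ∈ R, Adiff f i j R := by
          apply Finset.sum_congr rfl
          intro i _
          rw [Finset.sum_ite_mem, Finset.univ_inter]
  -- Step 3: pointwise bound and conclusion
  rw [hswap, mlExt, Finset.mul_sum]
  apply Finset.sum_le_sum
  intro R _
  calc (∑ i ∈ R, ∑ j ∈ R, Adiff f i j R) * pw x R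
      ≤ (2 * f R) * pw x R :=
        mul_le_mul_of_nonneg_right (key_bound f hnonneg hf0 h2nd R) (hpw R)
    _ = 2 * (f R * pw x R) := by ring
end

section
/- Let f be a non-negative, monotone, supermodular, γ-meta-submodular set function with multilinear extension F. Then for every x ∈ [0,1]^n \ {0} and all i, j ∈ [n], ‖x‖₁·∇²_{ij}F(x) ≤ max{3γ, 2γ+1}·(∇_i F(x) + ∇_j F(x)). -/
open Finset

section Aux

variable {n : ℕ} {f : Finset (Fin n) → ℝ}

lemma Bdiff_nonneg (hmono : ∀ S T : Finset (Fin n), S ⊆ T → f S ≤ f T)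
    (i : Fin n) (S : Finset (Fin n)) : 0 ≤ Bdiff f i S := by
  have : f (S.erase i) ≤ f (insert i S) :=
    hmono _ _ ((S.erase_subset i).trans (S.subset_insert i))
  simpa [Bdiff] using this

lemma Adiff_eq_sub (i j : Fin n) (S : Finset (Fin n)) :
    Adiff f i j S = Bdiff f j (insert i S) - Bdiff f j (S.erase i) := by
  simp only [Adiff, Bdiff]; ring

lemma Bdiff_le_insert (hsup : ∀ (i j : Fin n) (S : Finset (Fin n)), 0 ≤ Adiff f i j S)
    (i a : Fin n) (S : Finset (Fin n)) : Bdiff f i S ≤ Bdiff f i (insert a S) := by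
  by_cases h : a ∈ S
  · rw [Finset.insert_eq_self.2 h]
  · have h0 := hsup a i S
    rw [Adiff_eq_sub, Finset.erase_eq_self.2 h] at h0
    linarith

lemma Bdiff_mono (hsup : ∀ (i j : Fin n) (S : Finset (Fin n)), 0 ≤ Adiff f i j S)
    (i : Fin n) {S T : Finset (Fin n)} (hST : S ⊆ T) : Bdiff f i S ≤ Bdiff f i T := by
  have key : ∀ (U S : Finset (Fin n)), Bdiff f i S ≤ Bdiff f i (S ∪ U) := by
    intro U
    induction U using Finset.induction_on with
    | empty => intro S; simp
    | @insert a U _ ih =>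
        intro S
        rw [Finset.union_insert]
        exact (ih S).trans (Bdiff_le_insert hsup i a (S ∪ U))
  have h := key T S
  rwa [Finset.union_eq_right.2 hST] at h

lemma Adiff_le_insert (hmono : ∀ S T : Finset (Fin n), S ⊆ T → f S ≤ f T)
    (hsup : ∀ (i j : Fin n) (S : Finset (Fin n)), 0 ≤ Adiff f i j S)
    (i j v : Fin n) (S : Finset (Fin n)) :
    Adiff f i j S ≤ Adiff f i j (insert v S) + Bdiff f j (insert v S) := by
  rw [Adiff_eq_sub, Adiff_eq_sub]
  have h1 : Bdiff f j (insert i S) ≤ Bdiff f j (insert i (insert v S)) :=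
    Bdiff_mono hsup j (Finset.insert_subset_insert i (S.subset_insert v))
  have h2 : 0 ≤ Bdiff f j (S.erase i) := Bdiff_nonneg hmono j _
  have h3 : Bdiff f j ((insert v S).erase i) ≤ Bdiff f j (insert v S) :=
    Bdiff_mono hsup j (Finset.erase_subset i _)
  linarith

lemma pw_nonneg {x : Fin n → ℝ} (hx : ∀ v, x v ∈ Set.Icc (0 : ℝ) 1)
    (R : Finset (Fin n)) : 0 ≤ pw x R :=
  mul_nonneg (Finset.prod_nonneg fun v _ => (hx v).1)
    (Finset.prod_nonneg fun v _ => by linarith [(hx v).2])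

lemma pw_erase {x : Fin n → ℝ} {v : Fin n} {S : Finset (Fin n)} (hv : v ∈ S) :
    x v * pw x (S.erase v) = (1 - x v) * pw x S := by
  have hvn : v ∉ S.erase v := Finset.notMem_erase v S
  conv_rhs => rw [← Finset.insert_erase hv]
  rw [pw, pw, Finset.prod_insert hvn, Finset.compl_insert,
    ← Finset.mul_prod_erase _ _ (Finset.mem_compl.2 hvn)]
  ring

lemma sum_compl_reindex (g : Finset (Fin n) → Fin n → ℝ) :
    ∑ R : Finset (Fin n), ∑ v ∈ Rᶜ, g R v
      = ∑ S : Finset (Fin n), ∑ v ∈ S, g (S.erase v) v := by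
  rw [Finset.sum_sigma', Finset.sum_sigma']
  refine Finset.sum_bij' (fun p _ => (⟨insert p.2 p.1, p.2⟩ : Σ _ : Finset (Fin n), Fin n))
    (fun p _ => (⟨p.1.erase p.2, p.2⟩ : Σ _ : Finset (Fin n), Fin n)) ?_ ?_ ?_ ?_ ?_
  · intro p hp
    simp [Finset.mem_sigma]
  · intro p hp
    simp only [Finset.mem_sigma, Finset.mem_univ, true_and] at hp ⊢
    simp [Finset.notMem_erase]
  · intro p hp
    simp only [Finset.mem_sigma, Finset.mem_univ, true_and, Finset.mem_compl] at hp
    obtain ⟨R, v⟩ := p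
    simp only at hp ⊢
    simp [Finset.erase_insert hp]
  · intro p hp
    simp only [Finset.mem_sigma, Finset.mem_univ, true_and] at hp
    obtain ⟨S, v⟩ := p
    simp only at hp ⊢
    simp [Finset.insert_erase hp]
  · intro p hp
    simp only [Finset.mem_sigma, Finset.mem_univ, true_and, Finset.mem_compl] at hp
    obtain ⟨R, v⟩ := p
    simp [Finset.erase_insert hp]

end Aux

/-- The pointwise per-set inequality:
`|S|·A(S) + ∑_{v∈S} A(S\v) ≤ max{3γ,2γ+1}·(B_i(S)+B_j(S))`. -/
lemma perSet_claim {n : ℕ} (γ : ℝ) (hγ : 0 ≤ γ) {f : Finset (Fin n) → ℝ}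
    (hmono : ∀ S T : Finset (Fin n), S ⊆ T → f S ≤ f T)
    (hsup : ∀ (i j : Fin n) (S : Finset (Fin n)), 0 ≤ Adiff f i j S)
    (hms : ∀ S : Finset (Fin n), S.Nonempty → ∀ i j : Fin n,
      (S.card : ℝ) * Adiff f i j S ≤ γ * (Bdiff f i S + Bdiff f j S))
    (i j : Fin n) (S : Finset (Fin n)) :
    (S.card : ℝ) * Adiff f i j S + ∑ v ∈ S, Adiff f i j (S.erase v) ≤
      max (3 * γ) (2 * γ + 1) * (Bdiff f i S + Bdiff f j S) := by
  set c := max (3 * γ) (2 * γ + 1) with hc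
  have hc1 : 3 * γ ≤ c := le_max_left _ _
  have hc2 : 2 * γ + 1 ≤ c := le_max_right _ _
  set D := Bdiff f i S + Bdiff f j S with hD
  have hD0 : 0 ≤ D := add_nonneg (Bdiff_nonneg hmono i S) (Bdiff_nonneg hmono j S)
  rcases Nat.lt_or_ge S.card 2 with hs | hs
  · -- card 0 or 1
    have hs01 : S.card = 0 ∨ S.card = 1 := by omega
    rcases hs01 with h0 | h1
    · have hS : S = ∅ := Finset.card_eq_zero.1 h0
      subst hS
      simp only [Finset.card_empty, Nat.cast_zero, zero_mul, Finset.sum_empty, add_zero]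
      exact mul_nonneg (le_trans (by linarith) hc2) hD0
    · obtain ⟨v, hv⟩ := Finset.card_eq_one.1 h1
      subst hv
      have hA1 : (1 : ℝ) * Adiff f i j {v} ≤ γ * D := by
        have := hms {v} (Finset.singleton_nonempty v) i j
        simpa using this
      have hA0 : Adiff f i j ∅ ≤ Adiff f i j {v} + Bdiff f j {v} := by
        have := Adiff_le_insert hmono hsup i j v ∅
        simpa using this
      have hBj : Bdiff f j {v} ≤ D := by
        have := Bdiff_nonneg hmono i {v}
        rw [hD]; linarith
      have hcD : (2 * γ + 1) * D ≤ c * D := mul_le_mul_of_nonneg_right hc2 hD0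
      have hsum : ∑ u ∈ ({v} : Finset (Fin n)), Adiff f i j (({v} : Finset (Fin n)).erase u)
          = Adiff f i j ∅ := by
        simp
      rw [Finset.card_singleton, Nat.cast_one, hsum]
      nlinarith [hγ, hD0]
  · -- card ≥ 2
    have hsR : (2 : ℝ) ≤ (S.card : ℝ) := by exact_mod_cast hs
    have hSne : S.Nonempty := Finset.card_pos.1 (by omega)
    have h1 : (S.card : ℝ) * Adiff f i j S ≤ γ * D := hms S hSne i j
    have hpos : (0 : ℝ) < (S.card : ℝ) - 1 := by linarith
    have h2 : ∑ v ∈ S, Adiff f i j (S.erase v) ≤ 2 * γ * D := by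
      have hterm : ∀ v ∈ S, Adiff f i j (S.erase v) ≤ (γ * D) / ((S.card : ℝ) - 1) := by
        intro v hv
        have hcardv : ((S.erase v).card : ℝ) = (S.card : ℝ) - 1 := by
          rw [Finset.card_erase_of_mem hv]
          have h1' : 1 ≤ S.card := by omega
          rw [Nat.cast_sub h1', Nat.cast_one]
        have hne : (S.erase v).Nonempty := by
          rw [← Finset.card_pos, Finset.card_erase_of_mem hv]; omega
        have hms' := hms (S.erase v) hne i j
        have hDm : Bdiff f i (S.erase v) + Bdiff f j (S.erase v) ≤ D :=
          add_le_add (Bdiff_mono hsup i (Finset.erase_subset v S))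
            (Bdiff_mono hsup j (Finset.erase_subset v S))
        rw [le_div_iff₀ hpos]
        calc Adiff f i j (S.erase v) * ((S.card : ℝ) - 1)
            = ((S.erase v).card : ℝ) * Adiff f i j (S.erase v) := by rw [hcardv]; ring
          _ ≤ γ * (Bdiff f i (S.erase v) + Bdiff f j (S.erase v)) := hms'
          _ ≤ γ * D := mul_le_mul_of_nonneg_left hDm hγ
      calc ∑ v ∈ S, Adiff f i j (S.erase v)
          ≤ ∑ _v ∈ S, (γ * D) / ((S.card : ℝ) - 1) := Finset.sum_le_sum hterm
        _ = (S.card : ℝ) * ((γ * D) / ((S.card : ℝ) - 1)) := by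
            rw [Finset.sum_const, nsmul_eq_mul]
        _ ≤ 2 * γ * D := by
            rw [← mul_div_assoc, div_le_iff₀ hpos]
            nlinarith [mul_nonneg hγ hD0]
    calc (S.card : ℝ) * Adiff f i j S + ∑ v ∈ S, Adiff f i j (S.erase v)
        ≤ γ * D + 2 * γ * D := add_le_add h1 h2
      _ = (3 * γ) * D := by ring
      _ ≤ c * D := mul_le_mul_of_nonneg_right hc1 hD0

/-- The expectation inequality for non-negative, monotone, supermodular,
γ-meta-submodular functions:
`‖x‖₁ ∇²_{ij}F(x) ≤ max{3γ, 2γ+1} (∇_i F(x) + ∇_j F(x))`. -/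
theorem supermodular_metaSubmodular_expectation_ineq {n : ℕ} (γ : ℝ) (hγ : 0 ≤ γ)
    (f : Finset (Fin n) → ℝ)
    (hnonneg : ∀ S : Finset (Fin n), 0 ≤ f S) (hf0 : f ∅ = 0)
    (hmono : ∀ S T : Finset (Fin n), S ⊆ T → f S ≤ f T)
    (hsup : ∀ (i j : Fin n) (S : Finset (Fin n)), 0 ≤ Adiff f i j S)
    (hms : ∀ S : Finset (Fin n), S.Nonempty → ∀ i j : Fin n,
      (S.card : ℝ) * Adiff f i j S ≤ γ * (Bdiff f i S + Bdiff f j S)) :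
    ∀ x : Fin n → ℝ, (∀ v, x v ∈ Set.Icc (0 : ℝ) 1) → x ≠ 0 →
      ∀ i j : Fin n,
        (∑ v, x v) * hessML f x i j ≤
          max (3 * γ) (2 * γ + 1) * (gradML f x i + gradML f x j) := by
  intro x hx _ i j
  have hA : ∀ S, 0 ≤ Adiff f i j S := fun S => hsup i j S
  have hpw : ∀ R, 0 ≤ pw x R := pw_nonneg hx
  calc (∑ v, x v) * hessML f x i j
      = ∑ R : Finset (Fin n), Adiff f i j R * pw x R * (∑ v, x v) := by
        rw [hessML, Finset.mul_sum]
        refine Finset.sum_congr rfl fun R _ => ?_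
        ring
    _ = ∑ R : Finset (Fin n), (Adiff f i j R * pw x R * ∑ v ∈ R, x v
          + ∑ v ∈ Rᶜ, Adiff f i j R * (x v * pw x R)) := by
        refine Finset.sum_congr rfl fun R _ => ?_
        rw [← Finset.sum_add_sum_compl R x, mul_add]
        congr 1
        rw [Finset.mul_sum]
        refine Finset.sum_congr rfl fun v _ => ?_
        ring
    _ = (∑ R : Finset (Fin n), Adiff f i j R * pw x R * ∑ v ∈ R, x v)
          + ∑ S : Finset (Fin n), ∑ v ∈ S, Adiff f i j (S.erase v) * (x v * pw x (S.erase v)) := by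
        rw [Finset.sum_add_distrib, sum_compl_reindex (fun R v => Adiff f i j R * (x v * pw x R))]
    _ ≤ ∑ S : Finset (Fin n),
          pw x S * ((S.card : ℝ) * Adiff f i j S + ∑ v ∈ S, Adiff f i j (S.erase v)) := by
        rw [← Finset.sum_add_distrib]
        refine Finset.sum_le_sum fun S _ => ?_
        have hterm1 : Adiff f i j S * pw x S * (∑ v ∈ S, x v)
            ≤ pw x S * ((S.card : ℝ) * Adiff f i j S) := by
          have hsum : ∑ v ∈ S, x v ≤ (S.card : ℝ) := by
            calc ∑ v ∈ S, x v ≤ ∑ _v ∈ S, (1 : ℝ) :=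
                  Finset.sum_le_sum fun v _ => (hx v).2
              _ = (S.card : ℝ) := by simp
          have h0 : 0 ≤ Adiff f i j S * pw x S := mul_nonneg (hA S) (hpw S)
          calc Adiff f i j S * pw x S * (∑ v ∈ S, x v)
              ≤ Adiff f i j S * pw x S * (S.card : ℝ) :=
                mul_le_mul_of_nonneg_left hsum h0
            _ = pw x S * ((S.card : ℝ) * Adiff f i j S) := by ring
        have hterm2 : ∑ v ∈ S, Adiff f i j (S.erase v) * (x v * pw x (S.erase v))
            ≤ pw x S * ∑ v ∈ S, Adiff f i j (S.erase v) := by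
          rw [Finset.mul_sum]
          refine Finset.sum_le_sum fun v hv => ?_
          rw [pw_erase hv]
          have h1 : (1 - x v) * pw x S ≤ pw x S := by
            nlinarith [(hx v).1, hpw S]
          calc Adiff f i j (S.erase v) * ((1 - x v) * pw x S)
              ≤ Adiff f i j (S.erase v) * pw x S :=
                mul_le_mul_of_nonneg_left h1 (hA _)
            _ = pw x S * Adiff f i j (S.erase v) := by ring
        calc Adiff f i j S * pw x S * (∑ v ∈ S, x v)
              + ∑ v ∈ S, Adiff f i j (S.erase v) * (x v * pw x (S.erase v))
            ≤ pw x S * ((S.card : ℝ) * Adiff f i j S)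
              + pw x S * ∑ v ∈ S, Adiff f i j (S.erase v) := add_le_add hterm1 hterm2
          _ = pw x S * ((S.card : ℝ) * Adiff f i j S + ∑ v ∈ S, Adiff f i j (S.erase v)) := by
              ring
    _ ≤ ∑ S : Finset (Fin n),
          pw x S * (max (3 * γ) (2 * γ + 1) * (Bdiff f i S + Bdiff f j S)) :=
        Finset.sum_le_sum fun S _ =>
          mul_le_mul_of_nonneg_left (perSet_claim γ hγ hmono hsup hms i j S) (hpw S)
    _ = max (3 * γ) (2 * γ + 1) * (gradML f x i + gradML f x j) := by
        rw [gradML, gradML, ← Finset.sum_add_distrib, Finset.mul_sum]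
        exact Finset.sum_congr rfl fun S _ => by ring
end
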